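/- arXiv:1804.03071 — 6 statements merged into one kernel-verified Lean document; each statement's English description precedes it below -/
import Mathlib

section
/- Let M = M₁ ⊕ M₂ be a direct sum of two finite matroids and let i, j be two distinct elements lying in the ground set of the summand M₁ that are neither loops, coloops nor parallel in M. Then α(M; i, j) = α(M₁; i, j) and β(M; i, j) = β(M₁; i, j). -/
lemma key_card {α : Type*} (M₁ M₂ : Matroid α) (hdisj : Disjoint M₁.E M₂.E)
    (P : Set α → Prop)
    (hP : ∀ B₁ B₂ : Set α, B₁ ⊆ M₁.E → B₂ ⊆ M₂.E → (P (B₁ ∪ B₂) ↔ P B₁)) :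
    Nat.card {B : Set α // (M₁.disjointSum M₂ hdisj).IsBase B ∧ P B}
      = Nat.card {B : Set α // M₁.IsBase B ∧ P B} * Nat.card {B : Set α // M₂.IsBase B} := by
  rw [← Nat.card_prod]
  apply Nat.card_congr
  have e1 : ∀ B₁ B₂ : Set α, B₁ ⊆ M₁.E → B₂ ⊆ M₂.E → (B₁ ∪ B₂) ∩ M₁.E = B₁ := by
    intro B₁ B₂ h1 h2
    rw [Set.union_inter_distrib_right, Set.inter_eq_left.mpr h1,
      (hdisj.symm.mono_left h2).inter_eq, Set.union_empty]
  have e2 : ∀ B₁ B₂ : Set α, B₁ ⊆ M₁.E → B₂ ⊆ M₂.E → (B₁ ∪ B₂) ∩ M₂.E = B₂ := by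
    intro B₁ B₂ h1 h2
    rw [Set.union_inter_distrib_right, Set.inter_eq_left.mpr h2,
      (hdisj.mono_left h1).inter_eq, Set.empty_union]
  refine
    { toFun := fun B => ⟨⟨B.1 ∩ M₁.E, (Matroid.disjointSum_isBase_iff.mp B.2.1).1, ?_⟩,
        ⟨B.1 ∩ M₂.E, (Matroid.disjointSum_isBase_iff.mp B.2.1).2.1⟩⟩
      invFun := fun p => ⟨p.1.1 ∪ p.2.1, ?_, ?_⟩
      left_inv := ?_
      right_inv := ?_ }
  · obtain ⟨h1, h2, h3⟩ := Matroid.disjointSum_isBase_iff.mp B.2.1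
    have hB : B.1 = (B.1 ∩ M₁.E) ∪ (B.1 ∩ M₂.E) := by
      rw [← Set.inter_union_distrib_left, Set.inter_eq_left.mpr h3]
    rw [← hP _ _ Set.inter_subset_right Set.inter_subset_right, ← hB]
    exact B.2.2
  · rw [Matroid.disjointSum_isBase_iff,
      e1 _ _ p.1.2.1.subset_ground p.2.2.subset_ground,
      e2 _ _ p.1.2.1.subset_ground p.2.2.subset_ground]
    exact ⟨p.1.2.1, p.2.2, Set.union_subset_union p.1.2.1.subset_ground p.2.2.subset_ground⟩
  · exact (hP _ _ p.1.2.1.subset_ground p.2.2.subset_ground).mpr p.1.2.2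
  · rintro ⟨B, hB, hPB⟩
    obtain ⟨h1, h2, h3⟩ := Matroid.disjointSum_isBase_iff.mp hB
    ext x
    simp only [Set.mem_union, Set.mem_inter_iff]
    constructor
    · rintro (⟨hx, -⟩ | ⟨hx, -⟩) <;> exact hx
    · intro hx; rcases h3 hx with h | h
      · exact Or.inl ⟨hx, h⟩
      · exact Or.inr ⟨hx, h⟩
  · rintro ⟨⟨B₁, hB₁, hPB₁⟩, ⟨B₂, hB₂⟩⟩
    have h1 := hB₁.subset_ground
    have h2 := hB₂.subset_ground
    ext : 1 <;> simp [e1 _ _ h1 h2, e2 _ _ h1 h2]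



/-- `b`, the number of bases of the matroid `M`. -/
noncomputable def numBases {α : Type*} (M : Matroid α) : ℕ :=
  Nat.card {B : Set α // M.IsBase B}

/-- `b_i`, the number of bases of `M` containing the element `i`. -/
noncomputable def numBasesWith {α : Type*} (M : Matroid α) (i : α) : ℕ :=
  Nat.card {B : Set α // M.IsBase B ∧ i ∈ B}

/-- `b_{ij}`, the number of bases of `M` containing both `i` and `j`. -/
noncomputable def numBasesWith2 {α : Type*} (M : Matroid α) (i j : α) : ℕ :=
  Nat.card {B : Set α // M.IsBase B ∧ i ∈ B ∧ j ∈ B}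

/-- `b_i^j`, the number of bases of `M` containing `i` but not `j`. -/
noncomputable def numBasesWithWithout {α : Type*} (M : Matroid α) (i j : α) : ℕ :=
  Nat.card {B : Set α // M.IsBase B ∧ i ∈ B ∧ j ∉ B}

/-- `b^{ij}`, the number of bases of `M` containing neither `i` nor `j`. -/
noncomputable def numBasesWithout2 {α : Type*} (M : Matroid α) (i j : α) : ℕ :=
  Nat.card {B : Set α // M.IsBase B ∧ i ∉ B ∧ j ∉ B}

/-- `β(M; i, j) = (b · b_{ij})/(b_i · b_j)`, the correlation of the pair `i, j`. -/
noncomputable def betaRatio {α : Type*} (M : Matroid α) (i j : α) : ℝ :=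
  ((numBases M : ℝ) * (numBasesWith2 M i j : ℝ)) /
    ((numBasesWith M i : ℝ) * (numBasesWith M j : ℝ))

/-- `α(M; i, j) = (b^{ij} · b_{ij})/(b_i^j · b_j^i)`, the α-ratio of the pair `i, j`. -/
noncomputable def alphaRatio {α : Type*} (M : Matroid α) (i j : α) : ℝ :=
  ((numBasesWithout2 M i j : ℝ) * (numBasesWith2 M i j : ℝ)) /
    ((numBasesWithWithout M i j : ℝ) * (numBasesWithWithout M j i : ℝ))

/-- `i` is a loop of `M`: an element of the ground set contained in no independent set
(equivalently, in no basis). -/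
def IsLoopElem {α : Type*} (M : Matroid α) (i : α) : Prop :=
  i ∈ M.E ∧ ¬ M.Indep {i}

/-- `i` is a coloop of `M`: an element of the ground set contained in every basis. -/
def IsColoopElem {α : Type*} (M : Matroid α) (i : α) : Prop :=
  i ∈ M.E ∧ ∀ B, M.IsBase B → i ∈ B

/-- Two elements `i`, `j` are parallel in `M` if both are non-loops and the pair
`{i, j}` is dependent. -/
def ParallelElems {α : Type*} (M : Matroid α) (i j : α) : Prop :=
  M.Indep {i} ∧ M.Indep {j} ∧ ¬ M.Indep {i, j}

/-- For a direct sum `M = M₁ ⊕ M₂` of finite matroids and two distinct elements `i`, `j`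
of the ground set of `M₁` that are neither loops, coloops nor parallel in `M`, one has
`α(M; i, j) = α(M₁; i, j)` and `β(M; i, j) = β(M₁; i, j)`. -/
theorem stmt3 {α : Type*} (M₁ M₂ : Matroid α) (hdisj : Disjoint M₁.E M₂.E)
    (hfin₁ : M₁.E.Finite) (hfin₂ : M₂.E.Finite)
    (M : Matroid α) (hM : M = M₁.disjointSum M₂ hdisj)
    (i j : α) (hiE : i ∈ M₁.E) (hjE : j ∈ M₁.E) (hij : i ≠ j)
    (hli : ¬ IsLoopElem M i) (hlj : ¬ IsLoopElem M j)
    (hci : ¬ IsColoopElem M i) (hcj : ¬ IsColoopElem M j)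
    (hpar : ¬ ParallelElems M i j) :
    alphaRatio M i j = alphaRatio M₁ i j ∧ betaRatio M i j = betaRatio M₁ i j := by

  subst hM
  have hiM₂ : i ∉ M₂.E := Set.disjoint_left.mp hdisj hiE
  have hjM₂ : j ∉ M₂.E := Set.disjoint_left.mp hdisj hjE
  have mem_iff : ∀ (x : α), x ∉ M₂.E → ∀ (B₁ B₂ : Set α), B₂ ⊆ M₂.E →
      (x ∈ B₁ ∪ B₂ ↔ x ∈ B₁) := fun x hx B₁ B₂ h2 =>
    ⟨fun h => h.resolve_right (fun h' => hx (h2 h')), Or.inl⟩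
  -- finiteness and positivity of the number of bases of M₂
  have hsetfin : {B : Set α | M₂.IsBase B}.Finite :=
    hfin₂.finite_subsets.subset (fun B hB => Matroid.IsBase.subset_ground hB)
  have hfinB : Finite {B : Set α // M₂.IsBase B} := hsetfin.to_subtype
  have hne : Nonempty {B : Set α // M₂.IsBase B} := M₂.exists_isBase.elim fun B hB => ⟨⟨B, hB⟩⟩
  have hk0 : (Nat.card {B : Set α // M₂.IsBase B} : ℝ) ≠ 0 := by
    exact_mod_cast (Nat.card_pos).ne'
  set k : ℝ := (Nat.card {B : Set α // M₂.IsBase B} : ℝ) with hk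
  have hk2 : k * k ≠ 0 := mul_ne_zero hk0 hk0
  -- counting identities
  have etrue : ∀ (N : Matroid α),
      Nat.card {B : Set α // N.IsBase B ∧ True} = Nat.card {B : Set α // N.IsBase B} :=
    fun N => Nat.card_congr (Equiv.subtypeEquivRight fun B => Iff.symm (iff_self_and.mpr fun _ => trivial))
  have c0 : numBases (M₁.disjointSum M₂ hdisj)
      = numBases M₁ * Nat.card {B : Set α // M₂.IsBase B} := by
    have h := key_card M₁ M₂ hdisj (fun _ => True) (fun _ _ _ _ => Iff.rfl)
    rw [etrue, etrue] at h
    exact h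
  have ci : numBasesWith (M₁.disjointSum M₂ hdisj) i
      = numBasesWith M₁ i * Nat.card {B : Set α // M₂.IsBase B} :=
    key_card M₁ M₂ hdisj (fun B => i ∈ B) (fun B₁ B₂ _ h2 => mem_iff i hiM₂ B₁ B₂ h2)
  have cj : numBasesWith (M₁.disjointSum M₂ hdisj) j
      = numBasesWith M₁ j * Nat.card {B : Set α // M₂.IsBase B} :=
    key_card M₁ M₂ hdisj (fun B => j ∈ B) (fun B₁ B₂ _ h2 => mem_iff j hjM₂ B₁ B₂ h2)
  have cij : numBasesWith2 (M₁.disjointSum M₂ hdisj) i j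
      = numBasesWith2 M₁ i j * Nat.card {B : Set α // M₂.IsBase B} :=
    key_card M₁ M₂ hdisj (fun B => i ∈ B ∧ j ∈ B) (fun B₁ B₂ _ h2 =>
      and_congr (mem_iff i hiM₂ B₁ B₂ h2) (mem_iff j hjM₂ B₁ B₂ h2))
  have cinj : numBasesWithWithout (M₁.disjointSum M₂ hdisj) i j
      = numBasesWithWithout M₁ i j * Nat.card {B : Set α // M₂.IsBase B} :=
    key_card M₁ M₂ hdisj (fun B => i ∈ B ∧ j ∉ B) (fun B₁ B₂ _ h2 =>
      and_congr (mem_iff i hiM₂ B₁ B₂ h2) (not_congr (mem_iff j hjM₂ B₁ B₂ h2)))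
  have cjni : numBasesWithWithout (M₁.disjointSum M₂ hdisj) j i
      = numBasesWithWithout M₁ j i * Nat.card {B : Set α // M₂.IsBase B} :=
    key_card M₁ M₂ hdisj (fun B => j ∈ B ∧ i ∉ B) (fun B₁ B₂ _ h2 =>
      and_congr (mem_iff j hjM₂ B₁ B₂ h2) (not_congr (mem_iff i hiM₂ B₁ B₂ h2)))
  have cnn : numBasesWithout2 (M₁.disjointSum M₂ hdisj) i j
      = numBasesWithout2 M₁ i j * Nat.card {B : Set α // M₂.IsBase B} :=
    key_card M₁ M₂ hdisj (fun B => i ∉ B ∧ j ∉ B) (fun B₁ B₂ _ h2 =>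
      and_congr (not_congr (mem_iff i hiM₂ B₁ B₂ h2)) (not_congr (mem_iff j hjM₂ B₁ B₂ h2)))
  constructor
  · unfold alphaRatio
    rw [cnn, cij, cinj, cjni]
    push_cast
    rw [show (numBasesWithout2 M₁ i j : ℝ) * k * ((numBasesWith2 M₁ i j : ℝ) * k)
        = (numBasesWithout2 M₁ i j : ℝ) * (numBasesWith2 M₁ i j : ℝ) * (k * k) by ring,
      show (numBasesWithWithout M₁ i j : ℝ) * k * ((numBasesWithWithout M₁ j i : ℝ) * k)
        = (numBasesWithWithout M₁ i j : ℝ) * (numBasesWithWithout M₁ j i : ℝ) * (k * k) by ring,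
      mul_div_mul_right _ _ hk2]
  · unfold betaRatio
    rw [c0, cij, ci, cj]
    push_cast
    rw [show (numBases M₁ : ℝ) * k * ((numBasesWith2 M₁ i j : ℝ) * k)
        = (numBases M₁ : ℝ) * (numBasesWith2 M₁ i j : ℝ) * (k * k) by ring,
      show (numBasesWith M₁ i : ℝ) * k * ((numBasesWith M₁ j : ℝ) * k)
        = (numBasesWith M₁ i : ℝ) * (numBasesWith M₁ j : ℝ) * (k * k) by ring,
      mul_div_mul_right _ _ hk2]
end

section
/- Let M be a finite matroid and let i, j be two distinct elements that are neither loops nor parallel in M. If the pair i, j is positively correlated, i.e. β(M; i, j) > 1, then β(M; i, j) < α(M; i, j). In particular, for a matroid with positively correlated elements the α-ratio is an upper bound for its correlation constant. -/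
private lemma cardAux {α : Type*} (P : Set α → Prop) :
    Nat.card {B : Set α // P B} = {B : Set α | P B}.ncard :=
  Nat.card_coe_set_eq _

/-- For a finite matroid `M` and two distinct elements `i`, `j` that are neither loops
nor parallel: if the pair `i`, `j` is positively correlated, i.e. `β(M; i, j) > 1`,
then `β(M; i, j) < α(M; i, j)`; so for matroids with positively correlated elements the
α-ratio bounds the correlation constant from above. -/
theorem stmt6 {α : Type*} (M : Matroid α) (hfin : M.E.Finite)
    (i j : α) (hiE : i ∈ M.E) (hjE : j ∈ M.E) (hij : i ≠ j)
    (hli : ¬ IsLoopElem M i) (hlj : ¬ IsLoopElem M j)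
    (hpar : ¬ ParallelElems M i j)
    (hposcorr : 1 < betaRatio M i j) :
    betaRatio M i j < alphaRatio M i j := by
  classical
  -- names for the relevant counts
  set b := numBases M with hbdef
  set m := numBasesWith2 M i j with hmdef
  set bi := numBasesWith M i with hbidef
  set bj := numBasesWith M j with hbjdef
  set p := numBasesWithWithout M i j with hpdef
  set q := numBasesWithWithout M j i with hqdef
  set x := numBasesWithout2 M i j with hxdef
  -- finiteness of all families of bases
  have hS : {B : Set α | M.IsBase B}.Finite :=
    hfin.finite_subsets.subset (fun B hB => hB.subset_ground)
  have hfin' : ∀ P : Set α → Prop, {B : Set α | M.IsBase B ∧ P B}.Finite :=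
    fun P => hS.subset (fun B hB => hB.1)
  -- counting identities
  have hb : b = x + p + q + m := by
    rw [hbdef, hxdef, hpdef, hqdef, hmdef]
    unfold numBases numBasesWithout2 numBasesWithWithout numBasesWith2
    simp only [cardAux]
    have e1 : {B : Set α | M.IsBase B} =
        ({B : Set α | M.IsBase B ∧ i ∉ B ∧ j ∉ B} ∪ {B : Set α | M.IsBase B ∧ i ∈ B ∧ j ∉ B})
        ∪ ({B : Set α | M.IsBase B ∧ j ∈ B ∧ i ∉ B} ∪ {B : Set α | M.IsBase B ∧ i ∈ B ∧ j ∈ B}) := by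
      ext B; simp only [Set.mem_setOf_eq, Set.mem_union]; tauto
    rw [e1, Set.ncard_union_eq ?_ (((hfin' _).union (hfin' _))) (((hfin' _).union (hfin' _))),
      Set.ncard_union_eq ?_ (hfin' _) (hfin' _), Set.ncard_union_eq ?_ (hfin' _) (hfin' _)]
    · ring
    all_goals
      rw [Set.disjoint_left]; intro B hB hB'
      simp only [Set.mem_setOf_eq, Set.mem_union] at hB hB'
      tauto
  have hbi : bi = p + m := by
    rw [hbidef, hpdef, hmdef]
    unfold numBasesWith numBasesWithWithout numBasesWith2
    simp only [cardAux]
    have e1 : {B : Set α | M.IsBase B ∧ i ∈ B} =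
        {B : Set α | M.IsBase B ∧ i ∈ B ∧ j ∉ B} ∪ {B : Set α | M.IsBase B ∧ i ∈ B ∧ j ∈ B} := by
      ext B; simp only [Set.mem_setOf_eq, Set.mem_union]; tauto
    rw [e1, Set.ncard_union_eq ?_ (hfin' _) (hfin' _)]
    rw [Set.disjoint_left]; intro B hB hB'
    simp only [Set.mem_setOf_eq] at hB hB'
    tauto
  have hbj : bj = q + m := by
    rw [hbjdef, hqdef, hmdef]
    unfold numBasesWith numBasesWithWithout numBasesWith2
    simp only [cardAux]
    have e1 : {B : Set α | M.IsBase B ∧ j ∈ B} =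
        {B : Set α | M.IsBase B ∧ j ∈ B ∧ i ∉ B} ∪ {B : Set α | M.IsBase B ∧ i ∈ B ∧ j ∈ B} := by
      ext B; simp only [Set.mem_setOf_eq, Set.mem_union]; tauto
    rw [e1, Set.ncard_union_eq ?_ (hfin' _) (hfin' _)]
    rw [Set.disjoint_left]; intro B hB hB'
    simp only [Set.mem_setOf_eq] at hB hB'
    tauto
  -- from positivity of beta, the denominator is positive
  have hd : (0:ℝ) < (bi : ℝ) * (bj : ℝ) := by
    rcases (by positivity : (0:ℝ) ≤ (bi : ℝ) * (bj : ℝ)).lt_or_eq with h | h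
    · exact h
    · exfalso
      rw [betaRatio, ← hbdef, ← hmdef, ← hbidef, ← hbjdef, ← h, div_zero] at hposcorr
      linarith
  have hβ : (bi : ℝ) * (bj : ℝ) < (b : ℝ) * (m : ℝ) :=
    (one_lt_div hd).mp (by rwa [betaRatio, ← hbdef, ← hmdef, ← hbidef, ← hbjdef] at hposcorr)
  have hβn : bi * bj < b * m := by exact_mod_cast (by push_cast; exact hβ : ((bi*bj : ℕ):ℝ) < ((b*m : ℕ):ℝ))
  have hxm : p * q + 1 ≤ x * m := by nlinarith [hβn, hb, hbi, hbj]
  have hm1 : 1 ≤ m := by nlinarith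
  have hx1 : 1 ≤ x := by nlinarith
  -- a base avoiding both i and j
  have hxne : {B : Set α | M.IsBase B ∧ i ∉ B ∧ j ∉ B}.Nonempty := by
    rw [← Set.ncard_pos (hfin' _)]
    have : x = {B : Set α | M.IsBase B ∧ i ∉ B ∧ j ∉ B}.ncard := by
      rw [hxdef]; unfold numBasesWithout2; rw [cardAux]
    omega
  obtain ⟨B0, hB0, hi0, hj0⟩ := hxne
  have hIi : M.Indep {i} := by
    by_contra h; exact hli ⟨hiE, h⟩
  have hIj : M.Indep {j} := by
    by_contra h; exact hlj ⟨hjE, h⟩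
  -- a base with i but not j
  have hp1 : 1 ≤ p := by
    obtain ⟨B1, hB1, hsub, hsub'⟩ := hIi.exists_isBase_subset_union_isBase hB0
    have hiB1 : i ∈ B1 := hsub rfl
    have hjB1 : j ∉ B1 := fun hjb => by
      rcases hsub' hjb with h | h
      · exact hij (h.symm)
      · exact hj0 h
    have hne : {B : Set α | M.IsBase B ∧ i ∈ B ∧ j ∉ B}.Nonempty := ⟨B1, hB1, hiB1, hjB1⟩
    have : p = {B : Set α | M.IsBase B ∧ i ∈ B ∧ j ∉ B}.ncard := by
      rw [hpdef]; unfold numBasesWithWithout; rw [cardAux]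
    have := (Set.ncard_pos (hfin' _)).mpr hne
    omega
  have hq1 : 1 ≤ q := by
    obtain ⟨B1, hB1, hsub, hsub'⟩ := hIj.exists_isBase_subset_union_isBase hB0
    have hjB1 : j ∈ B1 := hsub rfl
    have hiB1 : i ∉ B1 := fun hib => by
      rcases hsub' hib with h | h
      · exact hij h
      · exact hi0 h
    have hne : {B : Set α | M.IsBase B ∧ j ∈ B ∧ i ∉ B}.Nonempty := ⟨B1, hB1, hjB1, hiB1⟩
    have : q = {B : Set α | M.IsBase B ∧ j ∈ B ∧ i ∉ B}.ncard := by
      rw [hqdef]; unfold numBasesWithWithout; rw [cardAux]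
    have := (Set.ncard_pos (hfin' _)).mpr hne
    omega
  -- final arithmetic
  have hdpq : (0:ℝ) < (p : ℝ) * (q : ℝ) := by
    have : (1:ℝ) ≤ p := by exact_mod_cast hp1
    have : (1:ℝ) ≤ q := by exact_mod_cast hq1
    nlinarith
  rw [betaRatio, alphaRatio, ← hbdef, ← hmdef, ← hbidef, ← hbjdef, ← hpdef, ← hqdef, ← hxdef,
    div_lt_div_iff₀ hd hdpq]
  -- reduce to a natural-number inequality
  have key : b * m * (p * q) < x * m * (bi * bj) := by
    rw [hb, hbi, hbj]
    nlinarith [Nat.mul_le_mul_left (p * m) hxm, Nat.mul_le_mul_left (q * m) hxm,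
      Nat.mul_le_mul_left (m * m) hxm, hm1, hp1, hq1, hx1]
  calc ((b:ℝ) * m) * ((p:ℝ) * q) = ((b * m * (p * q) : ℕ) : ℝ) := by push_cast; ring
    _ < ((x * m * (bi * bj) : ℕ) : ℝ) := by exact_mod_cast key
    _ = ((x:ℝ) * m) * ((bi:ℝ) * bj) := by push_cast; ring
end

section
/- Let M be a finite matroid of rank r, let i, j be a pair of elements that are neither loops, coloops nor parallel, and for an integer k ≥ 1 let M_k denote the matroid obtained from M by adding k − 1 parallel copies of each element other than i and j. Then the numbers of bases of the deletions and contractions of M_k satisfy b_{ij}(M_k) = k^{r−2} · b_{ij}(M), b_i^j(M_k) = k^{r−1} · b_i^j(M), b_j^i(M_k) = k^{r−1} · b_j^i(M), and b^{ij}(M_k) = k^r · b^{ij}(M); in particular α(M_k; i, j) = α(M; i, j). -/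
/-- The matroid `M_k` obtained from `M` by adding `k − 1` parallel copies of every
element other than `i` and `j`: each element `x ∉ {i, j}` of the ground set is replaced
by the parallel class `{(x, 0), …, (x, k−1)}`, while `i` and `j` are kept as the single
elements `(i, 0)` and `(j, 0)`. -/
noncomputable def parallelBlowup {α : Type*} (M : Matroid α) (i j : α) (k : ℕ)
    (hk : 0 < k) : Matroid (α × Fin k) :=
  (M.comap Prod.fst).restrict
    {p : α × Fin k | p.1 ∈ M.E ∧ ((p.1 = i ∨ p.1 = j) → p.2 = ⟨0, hk⟩)}

section Stmt10Aux

open Set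

/-- The ground set of the blowup. -/
def stmt10G {α : Type*} (M : Matroid α) (i j : α) (k : ℕ) (hk : 0 < k) :
    Set (α × Fin k) :=
  {p | p.1 ∈ M.E ∧ ((p.1 = i ∨ p.1 = j) → p.2 = ⟨0, hk⟩)}

lemma stmt10_indep_iff {α : Type*} (M : Matroid α) (i j : α) (k : ℕ) (hk : 0 < k)
    (I : Set (α × Fin k)) :
    (parallelBlowup M i j k hk).Indep I ↔
      M.Indep (Prod.fst '' I) ∧ Set.InjOn Prod.fst I ∧ I ⊆ stmt10G M i j k hk := by
  rw [parallelBlowup, Matroid.restrict_indep_iff, Matroid.comap_indep_iff]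
  exact ⟨fun h => ⟨h.1.1, h.1.2, h.2⟩, fun h => ⟨⟨h.1, h.2.1⟩, h.2.2⟩⟩

lemma stmt10_eq_of_subset {α : Type*} {k : ℕ} {B J : Set (α × Fin k)}
    (hBJ : B ⊆ J) (hinj : Set.InjOn Prod.fst J)
    (himg : Prod.fst '' B = Prod.fst '' J) : B = J := by
  refine Set.Subset.antisymm hBJ fun p hp => ?_
  have : p.1 ∈ Prod.fst '' B := himg ▸ Set.mem_image_of_mem _ hp
  obtain ⟨q, hq, hqe⟩ := this
  rwa [← hinj (hBJ hq) hp hqe]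

lemma stmt10_base_iff {α : Type*} (M : Matroid α) (i j : α) (k : ℕ) (hk : 0 < k)
    (B : Set (α × Fin k)) :
    (parallelBlowup M i j k hk).IsBase B ↔
      M.IsBase (Prod.fst '' B) ∧ Set.InjOn Prod.fst B ∧ B ⊆ stmt10G M i j k hk := by
  constructor
  · intro hB
    obtain ⟨hI, hinj, hsub⟩ := (stmt10_indep_iff M i j k hk B).1 hB.indep
    refine ⟨?_, hinj, hsub⟩
    by_contra h
    obtain ⟨B₁, hB₁⟩ := M.exists_isBase
    obtain ⟨e, he, hins⟩ := hI.exists_insert_of_not_isBase h hB₁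
    set p : α × Fin k := (e, ⟨0, hk⟩) with hp
    have hpG : p ∈ stmt10G M i j k hk :=
      ⟨hins.subset_ground (Set.mem_insert _ _), fun _ => rfl⟩
    have hpB : p ∉ B := fun hpB => he.2 (Set.mem_image_of_mem _ hpB)
    have hind : (parallelBlowup M i j k hk).Indep (insert p B) := by
      rw [stmt10_indep_iff]
      refine ⟨?_, ?_, Set.insert_subset hpG hsub⟩
      · rwa [Set.image_insert_eq]
      · intro a ha b hb hab
        rcases Set.mem_insert_iff.1 ha with rfl | ha <;>
          rcases Set.mem_insert_iff.1 hb with rfl | hb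
        · rfl
        · exact absurd (show e ∈ Prod.fst '' B from ⟨b, hb, hab.symm⟩) he.2
        · exact absurd (show e ∈ Prod.fst '' B from ⟨a, ha, hab⟩) he.2
        · exact hinj ha hb hab
    exact (hB.insert_dep ⟨hpG, hpB⟩).not_indep hind
  · rintro ⟨hB₀, hinj, hsub⟩
    have hI : (parallelBlowup M i j k hk).Indep B :=
      (stmt10_indep_iff M i j k hk B).2 ⟨hB₀.indep, hinj, hsub⟩
    refine hI.isBase_of_maximal fun J hJ hBJ => ?_
    obtain ⟨hJI, hJinj, hJsub⟩ := (stmt10_indep_iff M i j k hk J).1 hJ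
    exact stmt10_eq_of_subset hBJ hJinj
      (hB₀.eq_of_subset_indep hJI (Set.image_mono hBJ))

lemma stmt10_mem_image_iff {α : Type*} {M : Matroid α} {i j : α} {k : ℕ} {hk : 0 < k}
    {B : Set (α × Fin k)} (hsub : B ⊆ stmt10G M i j k hk) {x : α} (hx : x = i ∨ x = j) :
    x ∈ Prod.fst '' B ↔ (x, (⟨0, hk⟩ : Fin k)) ∈ B := by
  constructor
  · rintro ⟨p, hp, rfl⟩
    have := (hsub hp).2 hx
    rwa [← this, Prod.mk.eta]
  · exact fun h => Set.mem_image_of_mem _ h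

lemma stmt10_finite_subtype {β : Type*} {E : Set β} (hE : E.Finite)
    (P : Set β → Prop) (h : ∀ B, P B → B ⊆ E) : Finite {B : Set β // P B} := by
  have : Finite ↥{t : Set β | t ⊆ E} := hE.finite_subsets
  refine Finite.of_injective (fun B => (⟨B.1, h B.1 B.2⟩ : ↥{t : Set β | t ⊆ E})) ?_
  intro a b hab
  exact Subtype.ext (by simpa [Subtype.ext_iff] using hab)

lemma stmt10_card_eq_mul {S T : Type*} [Finite S] [Finite T] (f : S → T) (m : ℕ)
    (hfib : ∀ t : T, Nat.card {s : S // f s = t} = m) :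
    Nat.card S = m * Nat.card T := by
  classical
  cases nonempty_fintype T
  cases nonempty_fintype S
  rw [← Nat.card_congr (Equiv.sigmaFiberEquiv f)]
  have : ∀ t : T, Fintype {s : S // f s = t} := fun t => Fintype.ofFinite _
  rw [Nat.card_eq_fintype_card, Fintype.card_sigma]
  have : ∀ t : T, Fintype.card {s : S // f s = t} = m := fun t => by
    rw [← Nat.card_eq_fintype_card, hfib]
  simp only [this, Finset.sum_const, Finset.card_univ, smul_eq_mul,
    Nat.card_eq_fintype_card, mul_comm]

lemma stmt10_fiber_card {α : Type*} (M : Matroid α) (hfin : M.E.Finite) (i j : α)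
    (k : ℕ) (hk : 0 < k) (B₀ : Set α) (hB₀ : M.IsBase B₀) :
    Nat.card {B : Set (α × Fin k) //
        (parallelBlowup M i j k hk).IsBase B ∧ Prod.fst '' B = B₀} =
      k ^ (B₀ \ {i, j}).ncard := by
  classical
  set D : Set α := B₀ \ {i, j} with hD
  have hB₀fin : B₀.Finite := hfin.subset hB₀.subset_ground
  have hDfin : D.Finite := hB₀fin.subset diff_subset
  haveI : Finite ↥D := hDfin.to_subtype
  set g : (↥D → Fin k) → α → α × Fin k := fun t x =>
    (x, if h : x ∈ D then t ⟨x, h⟩ else ⟨0, hk⟩) with hg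
  have himg : ∀ t, Prod.fst '' (g t '' B₀) = B₀ := fun t => by
    rw [Set.image_image]; simp [hg]
  have hinj : ∀ t, Set.InjOn Prod.fst (g t '' B₀) := by
    rintro t p ⟨x, hx, rfl⟩ q ⟨y, hy, rfl⟩ h
    have : x = y := h
    subst this; rfl
  have hsubG : ∀ t, g t '' B₀ ⊆ stmt10G M i j k hk := by
    rintro t p ⟨x, hx, rfl⟩
    refine ⟨hB₀.subset_ground hx, fun hxij => ?_⟩
    have hxD : x ∉ D := fun hd => hd.2 (by
      rcases hxij with h | h
      · exact Or.inl h
      · exact Or.inr h)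
    simp only [hg, dif_neg hxD]
  have hbase : ∀ t, (parallelBlowup M i j k hk).IsBase (g t '' B₀) := fun t =>
    (stmt10_base_iff M i j k hk _).2 ⟨(himg t).symm ▸ hB₀, hinj t, hsubG t⟩
  set F : (↥D → Fin k) → {B : Set (α × Fin k) //
      (parallelBlowup M i j k hk).IsBase B ∧ Prod.fst '' B = B₀} :=
    fun t => ⟨g t '' B₀, hbase t, himg t⟩ with hF
  have hbij : Function.Bijective F := by
    constructor
    · intro t t' htt
      have heq : g t '' B₀ = g t' '' B₀ := congrArg Subtype.val htt
      funext x
      have hx1 : g t x.1 ∈ g t' '' B₀ := heq ▸ Set.mem_image_of_mem _ x.2.1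
      obtain ⟨y, hy, hyx⟩ := hx1
      have h1 : y = x.1 := congrArg Prod.fst hyx
      subst h1
      have h2 := congrArg Prod.snd hyx
      simp only [hg, dif_pos x.2] at h2
      exact h2.symm
    · rintro ⟨B, hBb, hBi⟩
      obtain ⟨hBbase, hBinj, hBsub⟩ := (stmt10_base_iff M i j k hk B).1 hBb
      have hmem : ∀ x : ↥D, ∃ p : α × Fin k, p ∈ B ∧ p.1 = x.1 := fun x => by
        have : x.1 ∈ Prod.fst '' B := hBi ▸ x.2.1
        obtain ⟨p, hp, hpe⟩ := this
        exact ⟨p, hp, hpe⟩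
      choose c hc1 hc2 using hmem
      refine ⟨fun x => (c x).2, Subtype.ext ?_⟩
      show g (fun x => (c x).2) '' B₀ = B
      refine stmt10_eq_of_subset ?_ hBinj ((himg (fun x => (c x).2)).trans hBi.symm)
      rintro p ⟨x, hx, rfl⟩
      by_cases h : x ∈ D
      · have : g (fun x => (c x).2) x = c ⟨x, h⟩ := by
          simp only [hg, dif_pos h]
          exact Prod.ext (hc2 ⟨x, h⟩).symm rfl
        rw [this]; exact hc1 ⟨x, h⟩
      · have hxij : x = i ∨ x = j := by
          by_contra hcon
          push_neg at hcon
          exact h ⟨hx, by simp [hcon.1, hcon.2]⟩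
        have : g (fun x => (c x).2) x = (x, (⟨0, hk⟩ : Fin k)) := by
          simp only [hg, dif_neg h]
        rw [this]
        exact (stmt10_mem_image_iff hBsub hxij).1 (hBi.symm ▸ hx)
  rw [← Nat.card_eq_of_bijective F hbij, Nat.card_fun, Nat.card_eq_fintype_card,
    Fintype.card_fin, Nat.card_coe_set_eq]

lemma stmt10_count {α : Type*} (M : Matroid α) (hfin : M.E.Finite) (i j : α)
    (k : ℕ) (hk : 0 < k) (e : ℕ)
    (Pα : Set α → Prop) (Pp : Set (α × Fin k) → Prop)
    (hcompat : ∀ B : Set (α × Fin k), B ⊆ stmt10G M i j k hk →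
      (Pp B ↔ Pα (Prod.fst '' B)))
    (hcard : ∀ B₀, M.IsBase B₀ → Pα B₀ → (B₀ \ {i, j}).ncard = e) :
    Nat.card {B : Set (α × Fin k) // (parallelBlowup M i j k hk).IsBase B ∧ Pp B} =
      k ^ e * Nat.card {B₀ : Set α // M.IsBase B₀ ∧ Pα B₀} := by
  classical
  have hGfin : (stmt10G M i j k hk).Finite :=
    ((hfin.prod (Set.finite_univ (α := Fin k)))).subset
      (fun p hp => ⟨hp.1, Set.mem_univ _⟩)
  haveI : Finite {B : Set (α × Fin k) // (parallelBlowup M i j k hk).IsBase B ∧ Pp B} :=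
    stmt10_finite_subtype hGfin _ (fun B hB => hB.1.subset_ground)
  haveI : Finite {B₀ : Set α // M.IsBase B₀ ∧ Pα B₀} :=
    stmt10_finite_subtype hfin _ (fun B hB => hB.1.subset_ground)
  set f : {B : Set (α × Fin k) // (parallelBlowup M i j k hk).IsBase B ∧ Pp B} →
      {B₀ : Set α // M.IsBase B₀ ∧ Pα B₀} := fun B =>
    ⟨Prod.fst '' B.1, ((stmt10_base_iff M i j k hk B.1).1 B.2.1).1,
      (hcompat B.1 ((stmt10_base_iff M i j k hk B.1).1 B.2.1).2.2).1 B.2.2⟩ with hf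
  apply stmt10_card_eq_mul f (k ^ e)
  rintro ⟨B₀, hB₀, hPα⟩
  rw [← hcard B₀ hB₀ hPα, ← stmt10_fiber_card M hfin i j k hk B₀ hB₀]
  apply Nat.card_congr
  refine ⟨fun s => ⟨s.1.1, s.1.2.1, congrArg Subtype.val s.2⟩,
    fun B => ⟨⟨B.1, B.2.1,
      (hcompat B.1 ((stmt10_base_iff M i j k hk B.1).1 B.2.1).2.2).2
        (by rw [B.2.2]; exact hPα)⟩, Subtype.ext B.2.2⟩,
    fun s => Subtype.ext (Subtype.ext rfl), fun B => Subtype.ext rfl⟩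

end Stmt10Aux

/-- For a finite matroid `M` of rank `r` with a pair of elements `i`, `j` that are
neither loops, coloops nor parallel, the basis counts of the matroid `M_k` obtained by
adding `k − 1` parallel copies of every element other than `i` and `j` satisfy
`b_{ij}(M_k) = k^(r−2)·b_{ij}(M)`, `b_i^j(M_k) = k^(r−1)·b_i^j(M)`,
`b_j^i(M_k) = k^(r−1)·b_j^i(M)`, `b^{ij}(M_k) = k^r·b^{ij}(M)`; in particular
`α(M_k; i, j) = α(M; i, j)`. -/
theorem stmt10 {α : Type*} (M : Matroid α) (hfin : M.E.Finite)
    (r : ℕ) (hrank : ∀ B, M.IsBase B → B.ncard = r)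
    (i j : α) (hiE : i ∈ M.E) (hjE : j ∈ M.E) (hij : i ≠ j)
    (hli : ¬ IsLoopElem M i) (hlj : ¬ IsLoopElem M j)
    (hci : ¬ IsColoopElem M i) (hcj : ¬ IsColoopElem M j)
    (hpar : ¬ ParallelElems M i j)
    (k : ℕ) (hk : 0 < k) :
    numBasesWith2 (parallelBlowup M i j k hk) (i, ⟨0, hk⟩) (j, ⟨0, hk⟩) =
        k ^ (r - 2) * numBasesWith2 M i j ∧
    numBasesWithWithout (parallelBlowup M i j k hk) (i, ⟨0, hk⟩) (j, ⟨0, hk⟩) =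
        k ^ (r - 1) * numBasesWithWithout M i j ∧
    numBasesWithWithout (parallelBlowup M i j k hk) (j, ⟨0, hk⟩) (i, ⟨0, hk⟩) =
        k ^ (r - 1) * numBasesWithWithout M j i ∧
    numBasesWithout2 (parallelBlowup M i j k hk) (i, ⟨0, hk⟩) (j, ⟨0, hk⟩) =
        k ^ r * numBasesWithout2 M i j ∧
    alphaRatio (parallelBlowup M i j k hk) (i, ⟨0, hk⟩) (j, ⟨0, hk⟩) =
        alphaRatio M i j := by
  classical
  -- r ≥ 2
  have hiI : M.Indep {i} := by
    by_contra h; exact hli ⟨hiE, h⟩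
  have hjI : M.Indep {j} := by
    by_contra h; exact hlj ⟨hjE, h⟩
  have hijI : M.Indep {i, j} := by
    by_contra h; exact hpar ⟨hiI, hjI, h⟩
  have hr2 : 2 ≤ r := by
    obtain ⟨B, hB, hsub⟩ := hijI.exists_isBase_superset
    have h2 : ({i, j} : Set α).ncard ≤ B.ncard :=
      Set.ncard_le_ncard hsub (hfin.subset hB.subset_ground)
    rwa [hrank B hB, Set.ncard_pair hij] at h2
  -- membership translations
  have hmemi : ∀ B : Set (α × Fin k), B ⊆ stmt10G M i j k hk →
      ((i, (⟨0, hk⟩ : Fin k)) ∈ B ↔ i ∈ Prod.fst '' B) := fun B hB =>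
    (stmt10_mem_image_iff hB (Or.inl rfl)).symm
  have hmemj : ∀ B : Set (α × Fin k), B ⊆ stmt10G M i j k hk →
      ((j, (⟨0, hk⟩ : Fin k)) ∈ B ↔ j ∈ Prod.fst '' B) := fun B hB =>
    (stmt10_mem_image_iff hB (Or.inr rfl)).symm
  -- the four counts
  have h11 : numBasesWith2 (parallelBlowup M i j k hk) (i, ⟨0, hk⟩) (j, ⟨0, hk⟩) =
      k ^ (r - 2) * numBasesWith2 M i j := by
    refine stmt10_count M hfin i j k hk (r - 2)
      (fun B₀ => i ∈ B₀ ∧ j ∈ B₀) _ (fun B hB => ?_) (fun B₀ hB₀ hP => ?_)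
    · rw [hmemi B hB, hmemj B hB]
    · have hBfin : B₀.Finite := hfin.subset hB₀.subset_ground
      rw [Set.ncard_diff (by simp [Set.insert_subset_iff, hP.1, hP.2]) (by simp),
        hrank B₀ hB₀, Set.ncard_pair hij]
  have h10 : numBasesWithWithout (parallelBlowup M i j k hk) (i, ⟨0, hk⟩) (j, ⟨0, hk⟩) =
      k ^ (r - 1) * numBasesWithWithout M i j := by
    refine stmt10_count M hfin i j k hk (r - 1)
      (fun B₀ => i ∈ B₀ ∧ j ∉ B₀) _ (fun B hB => ?_) (fun B₀ hB₀ hP => ?_)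
    · rw [hmemi B hB, hmemj B hB]
    · have hBfin : B₀.Finite := hfin.subset hB₀.subset_ground
      have hset : B₀ \ {i, j} = B₀ \ {i} := by
        ext x
        simp only [Set.mem_diff, Set.mem_insert_iff, Set.mem_singleton_iff]
        constructor
        · rintro ⟨h1, h2⟩; exact ⟨h1, fun h => h2 (Or.inl h)⟩
        · rintro ⟨h1, h2⟩
          refine ⟨h1, ?_⟩
          rintro (h | h)
          · exact h2 h
          · exact hP.2 (h ▸ h1)
      rw [hset, Set.ncard_diff_singleton_of_mem hP.1, hrank B₀ hB₀]
  have h01 : numBasesWithWithout (parallelBlowup M i j k hk) (j, ⟨0, hk⟩) (i, ⟨0, hk⟩) =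
      k ^ (r - 1) * numBasesWithWithout M j i := by
    refine stmt10_count M hfin i j k hk (r - 1)
      (fun B₀ => j ∈ B₀ ∧ i ∉ B₀) _ (fun B hB => ?_) (fun B₀ hB₀ hP => ?_)
    · rw [hmemi B hB, hmemj B hB]
    · have hBfin : B₀.Finite := hfin.subset hB₀.subset_ground
      have hset : B₀ \ {i, j} = B₀ \ {j} := by
        ext x
        simp only [Set.mem_diff, Set.mem_insert_iff, Set.mem_singleton_iff]
        constructor
        · rintro ⟨h1, h2⟩; exact ⟨h1, fun h => h2 (Or.inr h)⟩
        · rintro ⟨h1, h2⟩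
          refine ⟨h1, ?_⟩
          rintro (h | h)
          · exact hP.2 (h ▸ h1)
          · exact h2 h
      rw [hset, Set.ncard_diff_singleton_of_mem hP.1, hrank B₀ hB₀]
  have h00 : numBasesWithout2 (parallelBlowup M i j k hk) (i, ⟨0, hk⟩) (j, ⟨0, hk⟩) =
      k ^ r * numBasesWithout2 M i j := by
    refine stmt10_count M hfin i j k hk r
      (fun B₀ => i ∉ B₀ ∧ j ∉ B₀) _ (fun B hB => ?_) (fun B₀ hB₀ hP => ?_)
    · rw [hmemi B hB, hmemj B hB]
    · have hset : B₀ \ {i, j} = B₀ := by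
        ext x
        simp only [Set.mem_diff, Set.mem_insert_iff, Set.mem_singleton_iff]
        constructor
        · rintro ⟨h1, _⟩; exact h1
        · intro h1
          refine ⟨h1, ?_⟩
          rintro (h | h)
          · exact hP.1 (h ▸ h1)
          · exact hP.2 (h ▸ h1)
      rw [hset, hrank B₀ hB₀]
  refine ⟨h11, h10, h01, h00, ?_⟩
  -- the alpha ratio
  have hk0 : ((k : ℝ)) ≠ 0 := Nat.cast_ne_zero.2 hk.ne'
  simp only [alphaRatio, h11, h10, h01, h00]
  push_cast
  have e1 : (k : ℝ) ^ r * (numBasesWithout2 M i j : ℝ) *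
      ((k : ℝ) ^ (r - 2) * (numBasesWith2 M i j : ℝ)) =
      ((k : ℝ) ^ (r - 1) * (k : ℝ) ^ (r - 1)) *
        ((numBasesWithout2 M i j : ℝ) * (numBasesWith2 M i j : ℝ)) := by
    have hpow : (k : ℝ) ^ r * (k : ℝ) ^ (r - 2) = (k : ℝ) ^ (r - 1) * (k : ℝ) ^ (r - 1) := by
      rw [← pow_add, ← pow_add]
      congr 1
      omega
    linear_combination (numBasesWithout2 M i j : ℝ) * (numBasesWith2 M i j : ℝ) * hpow
  have e2 : (k : ℝ) ^ (r - 1) * (numBasesWithWithout M i j : ℝ) *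
      ((k : ℝ) ^ (r - 1) * (numBasesWithWithout M j i : ℝ)) =
      ((k : ℝ) ^ (r - 1) * (k : ℝ) ^ (r - 1)) *
        ((numBasesWithWithout M i j : ℝ) * (numBasesWithWithout M j i : ℝ)) := by
    ring
  rw [e1, e2, mul_div_mul_left _ _ (by positivity)]
end

section
/- Let M be a finite matroid of rank r, let i, j be a pair of elements that are neither loops, coloops nor parallel with b_{ij}(M) > 0, and for an integer k ≥ 1 let M_k denote the matroid obtained from M by adding k − 1 parallel copies of each element other than i and j. Then the sequence β(M_k; i, j) converges monotonically to α(M; i, j) as k → ∞; explicitly, β(M_k; i, j) = (k²·b^{ij}·b_{ij} + (k·b_i^j + k·b_j^i + b_{ij})·b_{ij}) / (k²·b_i^j·b_j^i + (k·b_i^j + k·b_j^i + b_{ij})·b_{ij}), where the counts on the right are those of M, and this sequence is increasing if b^{ij}·b_{ij} > b_i^j·b_j^i and decreasing if b^{ij}·b_{ij} < b_i^j·b_j^i. -/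
section Auxiliary

open Set

variable {α : Type*} {M : Matroid α} {i j : α}

/-- Splitting a `Nat.card` count by an extra predicate. -/
lemma card_split {β : Type*} (p q : β → Prop) (hfin : {x | p x}.Finite) :
    Nat.card {x // p x} = Nat.card {x // p x ∧ q x} + Nat.card {x // p x ∧ ¬ q x} := by
  classical
  have h1 : {x | p x} = {x | p x ∧ q x} ∪ {x | p x ∧ ¬ q x} := by
    ext x; by_cases hq : q x <;> simp [hq]
  have hfq : {x | p x ∧ q x}.Finite := hfin.subset fun x hx => hx.1
  have hfq' : {x | p x ∧ ¬ q x}.Finite := hfin.subset fun x hx => hx.1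
  have hd : Disjoint {x | p x ∧ q x} {x | p x ∧ ¬ q x} := by
    rw [Set.disjoint_left]; rintro x ⟨-, hq⟩ ⟨-, hq'⟩; exact hq' hq
  have h2 := Set.ncard_union_eq hd hfq hfq'
  rw [← h1] at h2
  have e0 : Nat.card {x // p x} = ({x | p x} : Set β).ncard := Nat.card_coe_set_eq _
  have e1 : Nat.card {x // p x ∧ q x} = ({x | p x ∧ q x} : Set β).ncard :=
    Nat.card_coe_set_eq _
  have e2 : Nat.card {x // p x ∧ ¬ q x} = ({x | p x ∧ ¬ q x} : Set β).ncard :=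
    Nat.card_coe_set_eq _
  rw [e0, e1, e2, h2]


lemma card_split3 {β : Type*} (p q r : β → Prop) (hfin : {x | p x ∧ q x}.Finite) :
    Nat.card {x // p x ∧ q x} =
      Nat.card {x // p x ∧ (q x ∧ r x)} + Nat.card {x // p x ∧ (q x ∧ ¬ r x)} := by
  rw [card_split (fun x => p x ∧ q x) r hfin]
  congr 1
  · exact Nat.card_congr (Equiv.subtypeEquivRight fun x => and_assoc)
  · exact Nat.card_congr (Equiv.subtypeEquivRight fun x => and_assoc)

variable (M i j) in
/-- The ground set of the parallel blow-up. -/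
def blowS (k : ℕ) (hk : 0 < k) : Set (α × Fin k) :=
  {p | p.1 ∈ M.E ∧ ((p.1 = i ∨ p.1 = j) → p.2 = ⟨0, hk⟩)}

lemma parallelBlowup_eq (k : ℕ) (hk : 0 < k) :
    parallelBlowup M i j k hk = (M.comap Prod.fst).restrict (blowS M i j k hk) := rfl

lemma blow_ground {k : ℕ} {hk : 0 < k} :
    (parallelBlowup M i j k hk).E = blowS M i j k hk := rfl

lemma blow_indep_iff {k : ℕ} {hk : 0 < k} {I : Set (α × Fin k)} :
    (parallelBlowup M i j k hk).Indep I ↔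
      M.Indep (Prod.fst '' I) ∧ Set.InjOn Prod.fst I ∧ I ⊆ blowS M i j k hk := by
  rw [parallelBlowup_eq, Matroid.restrict_indep_iff, Matroid.comap_indep_iff, and_assoc]

lemma blow_base_iff {k : ℕ} {hk : 0 < k} {B' : Set (α × Fin k)} :
    (parallelBlowup M i j k hk).IsBase B' ↔
      B' ⊆ blowS M i j k hk ∧ Set.InjOn Prod.fst B' ∧ M.IsBase (Prod.fst '' B') := by
  constructor
  · intro hB
    obtain ⟨him, hinj, hsub⟩ := blow_indep_iff.mp hB.indep
    refine ⟨hsub, hinj, ?_⟩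
    by_contra hnb
    obtain ⟨B0, hB0⟩ := M.exists_isBase
    obtain ⟨e, he, hei⟩ := him.exists_insert_of_not_isBase hnb hB0
    have heE : e ∈ M.E := hB0.subset_ground he.1
    have hnotmem : (e, (⟨0, hk⟩ : Fin k)) ∉ B' := fun h => he.2 ⟨_, h, rfl⟩
    have hind : (parallelBlowup M i j k hk).Indep (insert (e, (⟨0, hk⟩ : Fin k)) B') := by
      rw [blow_indep_iff]
      refine ⟨?_, ?_, ?_⟩
      · rw [Set.image_insert_eq]; exact hei
      · rintro p (rfl | hp) q (rfl | hq) hpq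
        · rfl
        · exact absurd ⟨q, hq, hpq.symm⟩ he.2
        · exact absurd ⟨p, hp, hpq⟩ he.2
        · exact hinj hp hq hpq
      · rintro p (rfl | hp)
        · exact ⟨heE, fun _ => rfl⟩
        · exact hsub hp
    have heq := hB.eq_of_subset_indep hind (Set.subset_insert _ _)
    have hmem : (e, (⟨0, hk⟩ : Fin k)) ∈ insert (e, (⟨0, hk⟩ : Fin k)) B' :=
      Set.mem_insert _ _
    rw [← heq] at hmem
    exact hnotmem hmem
  · rintro ⟨hsub, hinj, hbase⟩
    rw [Matroid.isBase_iff_maximal_indep]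
    refine ⟨blow_indep_iff.mpr ⟨hbase.indep, hinj, hsub⟩, ?_⟩
    intro I hI hBI
    obtain ⟨himI, hinjI, hsubI⟩ := blow_indep_iff.mp hI
    have him_eq : Prod.fst '' B' = Prod.fst '' I :=
      hbase.eq_of_subset_indep himI (Set.image_mono hBI)
    intro p hp
    have hp1 : p.1 ∈ Prod.fst '' B' := him_eq ▸ ⟨p, hp, rfl⟩
    obtain ⟨q, hq, hqp⟩ := hp1
    have hqpe : q = p := hinjI (hBI hq) hp hqp
    rwa [← hqpe]

lemma blow_mem_iff {k : ℕ} {hk : 0 < k} {B' : Set (α × Fin k)}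
    (hB : (parallelBlowup M i j k hk).IsBase B') {x : α} (hx : x = i ∨ x = j) :
    (x, (⟨0, hk⟩ : Fin k)) ∈ B' ↔ x ∈ Prod.fst '' B' := by
  constructor
  · intro h; exact ⟨_, h, rfl⟩
  · rintro ⟨⟨q1, q2⟩, hq, rfl⟩
    have hsub := (blow_base_iff.mp hB).1
    have hq2 : q2 = ⟨0, hk⟩ := (hsub hq).2 hx
    rw [← hq2]
    exact hq

end Auxiliary

section Counting

open Set

variable {α : Type*} {M : Matroid α} {i j : α}

open Classical in
/-- Value function used to reconstruct a basis of the blow-up. -/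
noncomputable def blowVal (i j : α) {k : ℕ} (hk : 0 < k) (B : Set α)
    (f : ↥(B \ ({i, j} : Set α)) → Fin k) (x : α) : Fin k :=
  if h : x ∈ B \ ({i, j} : Set α) then f ⟨x, h⟩ else ⟨0, hk⟩

lemma blowVal_pos {k : ℕ} {hk : 0 < k} {B : Set α}
    (f : ↥(B \ ({i, j} : Set α)) → Fin k) {x : α} (h : x ∈ B \ ({i, j} : Set α)) :
    blowVal i j hk B f x = f ⟨x, h⟩ := by
  rw [blowVal, dif_pos h]

lemma blowVal_neg {k : ℕ} {hk : 0 < k} {B : Set α}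
    (f : ↥(B \ ({i, j} : Set α)) → Fin k) {x : α} (h : x ∉ B \ ({i, j} : Set α)) :
    blowVal i j hk B f x = ⟨0, hk⟩ := by
  rw [blowVal, dif_neg h]

/-- The basis of the blow-up determined by a basis `B` of `M` and a choice of copies. -/
noncomputable def blowT (i j : α) {k : ℕ} (hk : 0 < k) (B : Set α)
    (f : ↥(B \ ({i, j} : Set α)) → Fin k) : Set (α × Fin k) :=
  {p | p.1 ∈ B ∧ p.2 = blowVal i j hk B f p.1}

lemma blowT_image {k : ℕ} (hk : 0 < k) (B : Set α)
    (f : ↥(B \ ({i, j} : Set α)) → Fin k) :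
    Prod.fst '' blowT i j hk B f = B := by
  apply subset_antisymm
  · rintro x ⟨p, hp, rfl⟩; exact hp.1
  · intro x hx; exact ⟨(x, blowVal i j hk B f x), ⟨hx, rfl⟩, rfl⟩

lemma blowT_base {k : ℕ} (hk : 0 < k) {B : Set α}
    (f : ↥(B \ ({i, j} : Set α)) → Fin k) (hB : M.IsBase B) :
    (parallelBlowup M i j k hk).IsBase (blowT i j hk B f) := by
  rw [blow_base_iff]
  refine ⟨?_, ?_, ?_⟩
  · rintro p ⟨hp1, hp2⟩
    refine ⟨hB.subset_ground hp1, fun hij => ?_⟩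
    have hnot : p.1 ∉ B \ ({i, j} : Set α) := by
      rintro ⟨-, hmem⟩
      rcases hij with h' | h' <;> simp [h'] at hmem
    rw [hp2, blowVal_neg f hnot]
  · rintro p hp q hq hpq
    exact Prod.ext hpq (by rw [hp.2, hq.2, hpq])
  · rw [blowT_image]; exact hB

lemma blow_count (hfin : M.E.Finite) {k : ℕ} (hk : 0 < k) (Q : Set α → Prop) (t : ℕ)
    (ht : ∀ B, M.IsBase B → Q B → (B \ ({i, j} : Set α)).ncard = t) :
    Nat.card {B' : Set (α × Fin k) //
        (parallelBlowup M i j k hk).IsBase B' ∧ Q (Prod.fst '' B')} =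
      Nat.card {B : Set α // M.IsBase B ∧ Q B} * k ^ t := by
  classical
  let Ψ : (Σ B : {B : Set α // M.IsBase B ∧ Q B}, (↥(B.1 \ ({i, j} : Set α)) → Fin k)) →
      {B' : Set (α × Fin k) //
        (parallelBlowup M i j k hk).IsBase B' ∧ Q (Prod.fst '' B')} :=
    fun x => ⟨blowT i j hk x.1.1 x.2, blowT_base hk x.2 x.1.2.1,
      by rw [blowT_image]; exact x.1.2.2⟩
  have hinjΨ : Function.Injective Ψ := by
    rintro ⟨⟨B1, hB1⟩, f1⟩ ⟨⟨B2, hB2⟩, f2⟩ h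
    have hT : blowT i j hk B1 f1 = blowT i j hk B2 f2 := congrArg Subtype.val h
    have hBeq : B1 = B2 := by
      rw [← blowT_image hk B1 f1, ← blowT_image hk B2 f2, hT]
    subst hBeq
    have hfeq : f1 = f2 := by
      funext x
      have hx1 : (x.1, blowVal i j hk B1 f1 x.1) ∈ blowT i j hk B1 f1 := ⟨x.2.1, rfl⟩
      rw [hT] at hx1
      have h2 := hx1.2
      rw [blowVal_pos f1 x.2, blowVal_pos f2 x.2] at h2
      simpa using h2
    cases hfeq
    rfl
  have hsurjΨ : Function.Surjective Ψ := by
    rintro ⟨B', hB', hQ'⟩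
    obtain ⟨hsub, hinjB, hbase⟩ := blow_base_iff.mp hB'
    let B : Set α := Prod.fst '' B'
    let pre : ↥(B \ ({i, j} : Set α)) → α × Fin k :=
      fun x => ((Set.mem_image Prod.fst B' x.1).mp x.2.1).choose
    have hpre : ∀ x, pre x ∈ B' ∧ (pre x).1 = x.1 :=
      fun x => ((Set.mem_image Prod.fst B' x.1).mp x.2.1).choose_spec
    let f : ↥(B \ ({i, j} : Set α)) → Fin k := fun x => (pre x).2
    have key : ∀ q ∈ B', q.2 = blowVal i j hk B f q.1 := by
      intro q hq
      by_cases h : q.1 ∈ B \ ({i, j} : Set α)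
      · rw [blowVal_pos f h]
        have h1 := hpre ⟨q.1, h⟩
        have h2 : pre ⟨q.1, h⟩ = q := hinjB h1.1 hq h1.2
        exact (congrArg Prod.snd h2).symm
      · have hq1 : q.1 ∈ B := ⟨q, hq, rfl⟩
        have hij : q.1 = i ∨ q.1 = j := by
          by_contra hc
          push_neg at hc
          exact h ⟨hq1, by simp [hc.1, hc.2]⟩
        rw [blowVal_neg f h]
        exact (hsub hq).2 hij
    have hTeq : blowT i j hk B f = B' := by
      ext p
      constructor
      · rintro ⟨hp1, hp2⟩
        obtain ⟨q, hq, hq1⟩ := hp1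
        have hpq : p = q := by
          refine Prod.ext hq1.symm ?_
          rw [hp2, ← hq1, ← key q hq]
        rw [hpq]; exact hq
      · intro hp
        exact ⟨⟨p, hp, rfl⟩, key p hp⟩
    exact ⟨⟨⟨B, hbase, hQ'⟩, f⟩, Subtype.ext hTeq⟩
  have hfinB : ∀ B : {B : Set α // M.IsBase B ∧ Q B}, (B.1 \ ({i, j} : Set α)).Finite :=
    fun B => (hfin.subset B.2.1.subset_ground).diff
  let e : ∀ B : {B : Set α // M.IsBase B ∧ Q B},
      (↥(B.1 \ ({i, j} : Set α)) → Fin k) ≃ (Fin t → Fin k) :=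
    fun B => Equiv.arrowCongr
      (@Finite.equivFinOfCardEq _ (hfinB B).to_subtype _
        (by rw [Nat.card_coe_set_eq]; exact ht B.1 B.2.1 B.2.2))
      (Equiv.refl (Fin k))
  calc Nat.card {B' : Set (α × Fin k) //
        (parallelBlowup M i j k hk).IsBase B' ∧ Q (Prod.fst '' B')}
      = Nat.card (Σ B : {B : Set α // M.IsBase B ∧ Q B},
          (↥(B.1 \ ({i, j} : Set α)) → Fin k)) :=
        (Nat.card_congr (Equiv.ofBijective Ψ ⟨hinjΨ, hsurjΨ⟩)).symm
    _ = Nat.card ({B : Set α // M.IsBase B ∧ Q B} × (Fin t → Fin k)) :=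
        Nat.card_congr (Equiv.sigmaEquivProdOfEquiv e)
    _ = Nat.card {B : Set α // M.IsBase B ∧ Q B} * k ^ t := by
        rw [Nat.card_prod, Nat.card_fun]
        simp [Nat.card_eq_fintype_card]

lemma blow_count2 (hfin : M.E.Finite) {k : ℕ} (hk : 0 < k) (Q : Set α → Prop)
    (Q' : Set (α × Fin k) → Prop)
    (hQQ : ∀ B', (parallelBlowup M i j k hk).IsBase B' → (Q' B' ↔ Q (Prod.fst '' B')))
    (t : ℕ) (ht : ∀ B, M.IsBase B → Q B → (B \ ({i, j} : Set α)).ncard = t) :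
    Nat.card {B' : Set (α × Fin k) // (parallelBlowup M i j k hk).IsBase B' ∧ Q' B'} =
      Nat.card {B : Set α // M.IsBase B ∧ Q B} * k ^ t := by
  have e : {B' : Set (α × Fin k) // (parallelBlowup M i j k hk).IsBase B' ∧ Q' B'} ≃
      {B' : Set (α × Fin k) //
        (parallelBlowup M i j k hk).IsBase B' ∧ Q (Prod.fst '' B')} :=
    Equiv.subtypeEquivRight fun B' =>
      ⟨fun h => ⟨h.1, (hQQ B' h.1).1 h.2⟩, fun h => ⟨h.1, (hQQ B' h.1).2 h.2⟩⟩
  rw [Nat.card_congr e]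
  exact blow_count hfin hk Q t ht

end Counting

section Analysis

open Filter Topology

lemma ratio_limit (a x y d : ℝ) (ha : 0 ≤ a) (hx : 0 < x) (hy : 0 < y) (hd : 0 < d) :
    Tendsto (fun n : ℕ =>
        ((((n : ℝ) + 1) ^ 2 * (a * d) + (((n : ℝ) + 1) * x + ((n : ℝ) + 1) * y + d) * d) /
          ((((n : ℝ) + 1)) ^ 2 * (x * y) + (((n : ℝ) + 1) * x + ((n : ℝ) + 1) * y + d) * d)))
      atTop (nhds ((a * d) / (x * y))) := by
  have hxy : (0:ℝ) < x * y := mul_pos hx hy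
  have hcont : ContinuousAt (fun t : ℝ =>
      ((a * d) + (t * x + t * y + t ^ 2 * d) * d) /
        ((x * y) + (t * x + t * y + t ^ 2 * d) * d)) 0 := by
    apply ContinuousAt.div
    · fun_prop
    · fun_prop
    · show (x * y) + ((0:ℝ) * x + 0 * y + 0 ^ 2 * d) * d ≠ 0
      have h2 : (x * y) + ((0:ℝ) * x + 0 * y + 0 ^ 2 * d) * d = x * y := by ring
      rw [h2]
      exact hxy.ne'
  have final := hcont.tendsto.comp tendsto_one_div_add_atTop_nhds_zero_nat
  have h0 : ((a * d) + ((0:ℝ) * x + 0 * y + 0 ^ 2 * d) * d) /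
      ((x * y) + ((0:ℝ) * x + 0 * y + 0 ^ 2 * d) * d) = (a * d) / (x * y) := by
    have h1 : ((a * d) + ((0:ℝ) * x + 0 * y + 0 ^ 2 * d) * d) = a * d := by ring
    have h2 : ((x * y) + ((0:ℝ) * x + 0 * y + 0 ^ 2 * d) * d) = x * y := by ring
    rw [h1, h2]
  rw [h0] at final
  refine final.congr fun n => ?_
  show ((a * d) + ((1 / ((n:ℝ) + 1)) * x + (1 / ((n:ℝ) + 1)) * y +
      (1 / ((n:ℝ) + 1)) ^ 2 * d) * d) /
      ((x * y) + ((1 / ((n:ℝ) + 1)) * x + (1 / ((n:ℝ) + 1)) * y +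
      (1 / ((n:ℝ) + 1)) ^ 2 * d) * d) = _
  have hm : (0 : ℝ) < (n : ℝ) + 1 := by positivity
  have hm' : ((n : ℝ) + 1) ≠ 0 := ne_of_gt hm
  have d1 : (x * y) + ((1 / ((n : ℝ) + 1)) * x + (1 / ((n : ℝ) + 1)) * y +
      (1 / ((n : ℝ) + 1)) ^ 2 * d) * d ≠ 0 := by positivity
  have d2 : (((n : ℝ) + 1)) ^ 2 * (x * y) + (((n : ℝ) + 1) * x + ((n : ℝ) + 1) * y + d) * d
      ≠ 0 := by positivity
  rw [div_eq_div_iff d1 d2]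
  field_simp

lemma ratio_mono (a x y d : ℝ) (hx : 0 < x) (hy : 0 < y) (hd : 0 < d)
    (hΔ : x * y < a * d) (m1 m2 : ℝ) (h1 : 0 < m1) (h12 : m1 < m2) :
    (m1 ^ 2 * (a * d) + (m1 * x + m1 * y + d) * d) /
        (m1 ^ 2 * (x * y) + (m1 * x + m1 * y + d) * d) <
      (m2 ^ 2 * (a * d) + (m2 * x + m2 * y + d) * d) /
        (m2 ^ 2 * (x * y) + (m2 * x + m2 * y + d) * d) := by
  have h2 : 0 < m2 := h1.trans h12
  have hD1 : 0 < m1 ^ 2 * (x * y) + (m1 * x + m1 * y + d) * d := by positivity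
  have hD2 : 0 < m2 ^ 2 * (x * y) + (m2 * x + m2 * y + d) * d := by positivity
  rw [div_lt_div_iff₀ hD1 hD2]
  have key : (m2 ^ 2 * (a * d) + (m2 * x + m2 * y + d) * d) *
        (m1 ^ 2 * (x * y) + (m1 * x + m1 * y + d) * d) -
      (m1 ^ 2 * (a * d) + (m1 * x + m1 * y + d) * d) *
        (m2 ^ 2 * (x * y) + (m2 * x + m2 * y + d) * d) =
      (a * d - x * y) * ((x + y) * d * (m1 * m2 * (m2 - m1)) + d * d * (m2 ^ 2 - m1 ^ 2)) := by
    ring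
  have hpos1 : 0 < (x + y) * d * (m1 * m2 * (m2 - m1)) :=
    mul_pos (mul_pos (add_pos hx hy) hd) (mul_pos (mul_pos h1 h2) (by linarith))
  have hpos2 : 0 < d * d * (m2 ^ 2 - m1 ^ 2) :=
    mul_pos (mul_pos hd hd) (by nlinarith)
  have hpos : 0 < (a * d - x * y) *
      ((x + y) * d * (m1 * m2 * (m2 - m1)) + d * d * (m2 ^ 2 - m1 ^ 2)) :=
    mul_pos (by linarith) (by linarith)
  linarith [key, hpos]

lemma ratio_anti (a x y d : ℝ) (hx : 0 < x) (hy : 0 < y) (hd : 0 < d)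
    (hΔ : a * d < x * y) (m1 m2 : ℝ) (h1 : 0 < m1) (h12 : m1 < m2) :
    (m2 ^ 2 * (a * d) + (m2 * x + m2 * y + d) * d) /
        (m2 ^ 2 * (x * y) + (m2 * x + m2 * y + d) * d) <
      (m1 ^ 2 * (a * d) + (m1 * x + m1 * y + d) * d) /
        (m1 ^ 2 * (x * y) + (m1 * x + m1 * y + d) * d) := by
  have h2 : 0 < m2 := h1.trans h12
  have hD1 : 0 < m1 ^ 2 * (x * y) + (m1 * x + m1 * y + d) * d := by positivity
  have hD2 : 0 < m2 ^ 2 * (x * y) + (m2 * x + m2 * y + d) * d := by positivity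
  rw [div_lt_div_iff₀ hD2 hD1]
  have key : (m1 ^ 2 * (a * d) + (m1 * x + m1 * y + d) * d) *
        (m2 ^ 2 * (x * y) + (m2 * x + m2 * y + d) * d) -
      (m2 ^ 2 * (a * d) + (m2 * x + m2 * y + d) * d) *
        (m1 ^ 2 * (x * y) + (m1 * x + m1 * y + d) * d) =
      (x * y - a * d) * ((x + y) * d * (m1 * m2 * (m2 - m1)) + d * d * (m2 ^ 2 - m1 ^ 2)) := by
    ring
  have hpos1 : 0 < (x + y) * d * (m1 * m2 * (m2 - m1)) :=
    mul_pos (mul_pos (add_pos hx hy) hd) (mul_pos (mul_pos h1 h2) (by linarith))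
  have hpos2 : 0 < d * d * (m2 ^ 2 - m1 ^ 2) :=
    mul_pos (mul_pos hd hd) (by nlinarith)
  have hpos : 0 < (x * y - a * d) *
      ((x + y) * d * (m1 * m2 * (m2 - m1)) + d * d * (m2 ^ 2 - m1 ^ 2)) :=
    mul_pos (by linarith) (by linarith)
  linarith [key, hpos]

end Analysis

/-- For a finite matroid `M` of rank `r` and a pair of elements `i`, `j` that are
neither loops, coloops nor parallel with `b_{ij}(M) > 0`, the sequence of correlations
`β(M_k; i, j)` of the matroids `M_k` obtained by adding `k − 1` parallel copies of every
element other than `i` and `j` is given by the explicit formula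
`β(M_k; i, j) = (k²·b^{ij}·b_{ij} + (k·b_i^j + k·b_j^i + b_{ij})·b_{ij}) /
(k²·b_i^j·b_j^i + (k·b_i^j + k·b_j^i + b_{ij})·b_{ij})`, it converges to `α(M; i, j)`
as `k → ∞`, it is strictly increasing if `b^{ij}·b_{ij} > b_i^j·b_j^i`, and strictly
decreasing if `b^{ij}·b_{ij} < b_i^j·b_j^i`. -/
theorem stmt11 {α : Type*} (M : Matroid α) (hfin : M.E.Finite)
    (r : ℕ) (hrank : ∀ B, M.IsBase B → B.ncard = r)
    (i j : α) (hiE : i ∈ M.E) (hjE : j ∈ M.E) (hij : i ≠ j)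
    (hli : ¬ IsLoopElem M i) (hlj : ¬ IsLoopElem M j)
    (hci : ¬ IsColoopElem M i) (hcj : ¬ IsColoopElem M j)
    (hpar : ¬ ParallelElems M i j)
    (hDpos : 0 < numBasesWith2 M i j) :
    (∀ (k : ℕ) (hk : 0 < k),
      betaRatio (parallelBlowup M i j k hk) (i, ⟨0, hk⟩) (j, ⟨0, hk⟩) =
        ((k : ℝ) ^ 2 * ((numBasesWithout2 M i j : ℝ) * (numBasesWith2 M i j : ℝ)) +
            ((k : ℝ) * (numBasesWithWithout M i j : ℝ) +
              (k : ℝ) * (numBasesWithWithout M j i : ℝ) +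
              (numBasesWith2 M i j : ℝ)) * (numBasesWith2 M i j : ℝ)) /
          ((k : ℝ) ^ 2 * ((numBasesWithWithout M i j : ℝ) *
              (numBasesWithWithout M j i : ℝ)) +
            ((k : ℝ) * (numBasesWithWithout M i j : ℝ) +
              (k : ℝ) * (numBasesWithWithout M j i : ℝ) +
              (numBasesWith2 M i j : ℝ)) * (numBasesWith2 M i j : ℝ))) ∧
    Filter.Tendsto
      (fun k : ℕ =>
        betaRatio (parallelBlowup M i j (k + 1) k.succ_pos)
          (i, ⟨0, k.succ_pos⟩) (j, ⟨0, k.succ_pos⟩))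
      Filter.atTop (nhds (alphaRatio M i j)) ∧
    (numBasesWithWithout M i j * numBasesWithWithout M j i <
        numBasesWithout2 M i j * numBasesWith2 M i j →
      StrictMono (fun k : ℕ =>
        betaRatio (parallelBlowup M i j (k + 1) k.succ_pos)
          (i, ⟨0, k.succ_pos⟩) (j, ⟨0, k.succ_pos⟩))) ∧
    (numBasesWithout2 M i j * numBasesWith2 M i j <
        numBasesWithWithout M i j * numBasesWithWithout M j i →
      StrictAnti (fun k : ℕ =>
        betaRatio (parallelBlowup M i j (k + 1) k.succ_pos)
          (i, ⟨0, k.succ_pos⟩) (j, ⟨0, k.succ_pos⟩))) := by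
  classical
  -- basic independence facts
  have hIi : M.Indep {i} := by by_contra h; exact hli ⟨hiE, h⟩
  have hIj : M.Indep {j} := by by_contra h; exact hlj ⟨hjE, h⟩
  have hIij : M.Indep {i, j} := by by_contra h; exact hpar ⟨hIi, hIj, h⟩
  obtain ⟨B₀, hB₀, hijB₀⟩ := hIij.exists_isBase_superset
  have hiB₀ : i ∈ B₀ := hijB₀ (by simp)
  have hjB₀ : j ∈ B₀ := hijB₀ (by simp)
  have hr2 : 2 ≤ r := by
    have h1 := Set.ncard_le_ncard hijB₀ (hfin.subset hB₀.subset_ground)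
    rwa [Set.ncard_pair hij, hrank B₀ hB₀] at h1
  obtain ⟨s, rfl⟩ : ∃ s, r = s + 2 := ⟨r - 2, by omega⟩
  have hfinPred : ∀ P : Set α → Prop, {B : Set α | M.IsBase B ∧ P B}.Finite :=
    fun P => hfin.finite_subsets.subset fun B hB => hB.1.subset_ground
  -- b_i^j > 0
  have hx0 : 0 < numBasesWithWithout M i j := by
    have hnc : ¬ ∀ B, M.IsBase B → j ∈ B := fun h => hcj ⟨hjE, h⟩
    push_neg at hnc
    obtain ⟨B₂, hB₂, hjB₂⟩ := hnc
    obtain ⟨e, he, hB₃⟩ := hB₀.exchange hB₂ ⟨hjB₀, hjB₂⟩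
    have hiB₃ : i ∈ insert e (B₀ \ {j}) := Set.mem_insert_iff.mpr (Or.inr ⟨hiB₀, hij⟩)
    have hjB₃ : j ∉ insert e (B₀ \ {j}) := by
      intro hmem
      rcases Set.mem_insert_iff.mp hmem with rfl | hmem2
      · exact hjB₂ he.1
      · exact hmem2.2 rfl
    rw [numBasesWithWithout, Nat.card_pos_iff]
    exact ⟨⟨⟨_, hB₃, hiB₃, hjB₃⟩⟩, (hfinPred fun B => i ∈ B ∧ j ∉ B).to_subtype⟩
  -- b_j^i > 0
  have hy0 : 0 < numBasesWithWithout M j i := by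
    have hnc : ¬ ∀ B, M.IsBase B → i ∈ B := fun h => hci ⟨hiE, h⟩
    push_neg at hnc
    obtain ⟨B₂, hB₂, hiB₂⟩ := hnc
    obtain ⟨e, he, hB₃⟩ := hB₀.exchange hB₂ ⟨hiB₀, hiB₂⟩
    have hjB₃ : j ∈ insert e (B₀ \ {i}) := Set.mem_insert_iff.mpr (Or.inr ⟨hjB₀, Ne.symm hij⟩)
    have hiB₃ : i ∉ insert e (B₀ \ {i}) := by
      intro hmem
      rcases Set.mem_insert_iff.mp hmem with rfl | hmem2
      · exact hiB₂ he.1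
      · exact hmem2.2 rfl
    rw [numBasesWithWithout, Nat.card_pos_iff]
    exact ⟨⟨⟨_, hB₃, hjB₃, hiB₃⟩⟩, (hfinPred fun B => j ∈ B ∧ i ∉ B).to_subtype⟩
  -- cardinality of B \ {i,j} in the various cases
  have hT11 : ∀ B, M.IsBase B → (i ∈ B ∧ j ∈ B) → (B \ ({i, j} : Set α)).ncard = s := by
    intro B hB hQ
    have hsubij : ({i, j} : Set α) ⊆ B := by
      intro z hz
      rcases Set.mem_insert_iff.mp hz with rfl | hz2
      · exact hQ.1
      · rw [Set.mem_singleton_iff] at hz2; subst hz2; exact hQ.2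
    rw [Set.ncard_diff hsubij, hrank B hB, Set.ncard_pair hij]
    omega
  have hT10 : ∀ B, M.IsBase B → (i ∈ B ∧ j ∉ B) → (B \ ({i, j} : Set α)).ncard = s + 1 := by
    intro B hB hQ
    have hBfin : B.Finite := hfin.subset hB.subset_ground
    have hd : B \ ({i, j} : Set α) = B \ {i} := by
      ext z
      simp only [Set.mem_diff, Set.mem_insert_iff, Set.mem_singleton_iff]
      constructor
      · rintro ⟨hz, h2⟩; exact ⟨hz, fun h => h2 (Or.inl h)⟩
      · rintro ⟨hz, h2⟩
        refine ⟨hz, ?_⟩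
        rintro (rfl | rfl)
        · exact h2 rfl
        · exact hQ.2 hz
    rw [hd, Set.ncard_diff_singleton_of_mem hQ.1, hrank B hB]
    omega
  have hT01 : ∀ B, M.IsBase B → (j ∈ B ∧ i ∉ B) → (B \ ({i, j} : Set α)).ncard = s + 1 := by
    intro B hB hQ
    have hBfin : B.Finite := hfin.subset hB.subset_ground
    have hd : B \ ({i, j} : Set α) = B \ {j} := by
      ext z
      simp only [Set.mem_diff, Set.mem_insert_iff, Set.mem_singleton_iff]
      constructor
      · rintro ⟨hz, h2⟩; exact ⟨hz, fun h => h2 (Or.inr h)⟩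
      · rintro ⟨hz, h2⟩
        refine ⟨hz, ?_⟩
        rintro (rfl | rfl)
        · exact hQ.2 hz
        · exact h2 rfl
    rw [hd, Set.ncard_diff_singleton_of_mem hQ.1, hrank B hB]
    omega
  have hT00 : ∀ B, M.IsBase B → (i ∉ B ∧ j ∉ B) → (B \ ({i, j} : Set α)).ncard = s + 2 := by
    intro B hB hQ
    have hd : B \ ({i, j} : Set α) = B := by
      ext z
      simp only [Set.mem_diff, Set.mem_insert_iff, Set.mem_singleton_iff]
      constructor
      · exact fun h => h.1
      · intro hz
        refine ⟨hz, ?_⟩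
        rintro (rfl | rfl)
        · exact hQ.1 hz
        · exact hQ.2 hz
    rw [hd, hrank B hB]
  -- real positivity facts
  have hdR : (0:ℝ) < (numBasesWith2 M i j : ℝ) := by exact_mod_cast hDpos
  have hxR : (0:ℝ) < (numBasesWithWithout M i j : ℝ) := by exact_mod_cast hx0
  have hyR : (0:ℝ) < (numBasesWithWithout M j i : ℝ) := by exact_mod_cast hy0
  -- the explicit formula
  have hformula : ∀ (k : ℕ) (hk : 0 < k),
      betaRatio (parallelBlowup M i j k hk) (i, ⟨0, hk⟩) (j, ⟨0, hk⟩) =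
        ((k : ℝ) ^ 2 * ((numBasesWithout2 M i j : ℝ) * (numBasesWith2 M i j : ℝ)) +
            ((k : ℝ) * (numBasesWithWithout M i j : ℝ) +
              (k : ℝ) * (numBasesWithWithout M j i : ℝ) +
              (numBasesWith2 M i j : ℝ)) * (numBasesWith2 M i j : ℝ)) /
          ((k : ℝ) ^ 2 * ((numBasesWithWithout M i j : ℝ) *
              (numBasesWithWithout M j i : ℝ)) +
            ((k : ℝ) * (numBasesWithWithout M i j : ℝ) +
              (k : ℝ) * (numBasesWithWithout M j i : ℝ) +
              (numBasesWith2 M i j : ℝ)) * (numBasesWith2 M i j : ℝ)) := by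
    intro k hk
    have hfinS : (blowS M i j k hk).Finite := by
      apply (hfin.prod Set.finite_univ).subset
      intro p hp
      exact ⟨hp.1, Set.mem_univ _⟩
    have hfinBase : {B' : Set (α × Fin k) | (parallelBlowup M i j k hk).IsBase B'}.Finite :=
      hfinS.finite_subsets.subset fun B' hB' => (blow_base_iff.mp hB').1
    have hfinBase2 : ∀ P : Set (α × Fin k) → Prop,
        {B' : Set (α × Fin k) | (parallelBlowup M i j k hk).IsBase B' ∧ P B'}.Finite :=
      fun P => hfinBase.subset fun B' hB' => hB'.1
    have hmi : ∀ B' : Set (α × Fin k), (parallelBlowup M i j k hk).IsBase B' →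
        ((i, (⟨0, hk⟩ : Fin k)) ∈ B' ↔ i ∈ Prod.fst '' B') :=
      fun B' hB' => blow_mem_iff hB' (Or.inl rfl)
    have hmj : ∀ B' : Set (α × Fin k), (parallelBlowup M i j k hk).IsBase B' →
        ((j, (⟨0, hk⟩ : Fin k)) ∈ B' ↔ j ∈ Prod.fst '' B') :=
      fun B' hB' => blow_mem_iff hB' (Or.inr rfl)
    -- atomic counts
    have e11 : Nat.card {B' : Set (α × Fin k) // (parallelBlowup M i j k hk).IsBase B' ∧
        ((i, (⟨0, hk⟩ : Fin k)) ∈ B' ∧ (j, (⟨0, hk⟩ : Fin k)) ∈ B')} =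
        numBasesWith2 M i j * k ^ s :=
      blow_count2 hfin hk (fun B => i ∈ B ∧ j ∈ B) _
        (fun B' hB' => and_congr (hmi B' hB') (hmj B' hB')) s hT11
    have e10 : Nat.card {B' : Set (α × Fin k) // (parallelBlowup M i j k hk).IsBase B' ∧
        ((i, (⟨0, hk⟩ : Fin k)) ∈ B' ∧ (j, (⟨0, hk⟩ : Fin k)) ∉ B')} =
        numBasesWithWithout M i j * k ^ (s + 1) :=
      blow_count2 hfin hk (fun B => i ∈ B ∧ j ∉ B) _
        (fun B' hB' => and_congr (hmi B' hB') (not_congr (hmj B' hB'))) (s + 1) hT10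
    have e11s : Nat.card {B' : Set (α × Fin k) // (parallelBlowup M i j k hk).IsBase B' ∧
        ((j, (⟨0, hk⟩ : Fin k)) ∈ B' ∧ (i, (⟨0, hk⟩ : Fin k)) ∈ B')} =
        numBasesWith2 M i j * k ^ s :=
      blow_count2 hfin hk (fun B => i ∈ B ∧ j ∈ B) _
        (fun B' hB' => ⟨fun h => ⟨(hmi B' hB').1 h.2, (hmj B' hB').1 h.1⟩,
          fun h => ⟨(hmj B' hB').2 h.2, (hmi B' hB').2 h.1⟩⟩) s hT11
    have e01s : Nat.card {B' : Set (α × Fin k) // (parallelBlowup M i j k hk).IsBase B' ∧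
        ((j, (⟨0, hk⟩ : Fin k)) ∈ B' ∧ (i, (⟨0, hk⟩ : Fin k)) ∉ B')} =
        numBasesWithWithout M j i * k ^ (s + 1) :=
      blow_count2 hfin hk (fun B => j ∈ B ∧ i ∉ B) _
        (fun B' hB' => and_congr (hmj B' hB') (not_congr (hmi B' hB'))) (s + 1) hT01
    have e01x : Nat.card {B' : Set (α × Fin k) // (parallelBlowup M i j k hk).IsBase B' ∧
        ((i, (⟨0, hk⟩ : Fin k)) ∉ B' ∧ (j, (⟨0, hk⟩ : Fin k)) ∈ B')} =
        numBasesWithWithout M j i * k ^ (s + 1) :=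
      blow_count2 hfin hk (fun B => j ∈ B ∧ i ∉ B) _
        (fun B' hB' => ⟨fun h => ⟨(hmj B' hB').1 h.2, fun hc => h.1 ((hmi B' hB').2 hc)⟩,
          fun h => ⟨fun hc => h.2 ((hmi B' hB').1 hc), (hmj B' hB').2 h.1⟩⟩) (s + 1) hT01
    have e00 : Nat.card {B' : Set (α × Fin k) // (parallelBlowup M i j k hk).IsBase B' ∧
        ((i, (⟨0, hk⟩ : Fin k)) ∉ B' ∧ (j, (⟨0, hk⟩ : Fin k)) ∉ B')} =
        numBasesWithout2 M i j * k ^ (s + 2) :=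
      blow_count2 hfin hk (fun B => i ∉ B ∧ j ∉ B) _
        (fun B' hB' => and_congr (not_congr (hmi B' hB')) (not_congr (hmj B' hB')))
        (s + 2) hT00
    -- assembled counts
    have hbij : numBasesWith2 (parallelBlowup M i j k hk)
        (i, (⟨0, hk⟩ : Fin k)) (j, (⟨0, hk⟩ : Fin k)) = numBasesWith2 M i j * k ^ s := e11
    have hbi : numBasesWith (parallelBlowup M i j k hk) (i, (⟨0, hk⟩ : Fin k)) =
        numBasesWith2 M i j * k ^ s + numBasesWithWithout M i j * k ^ (s + 1) := by
      have h1 := card_split3 (fun B' : Set (α × Fin k) => (parallelBlowup M i j k hk).IsBase B')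
        (fun B' => (i, (⟨0, hk⟩ : Fin k)) ∈ B') (fun B' => (j, (⟨0, hk⟩ : Fin k)) ∈ B')
        (hfinBase2 _)
      rw [e11, e10] at h1
      exact h1
    have hbj : numBasesWith (parallelBlowup M i j k hk) (j, (⟨0, hk⟩ : Fin k)) =
        numBasesWith2 M i j * k ^ s + numBasesWithWithout M j i * k ^ (s + 1) := by
      have h1 := card_split3 (fun B' : Set (α × Fin k) => (parallelBlowup M i j k hk).IsBase B')
        (fun B' => (j, (⟨0, hk⟩ : Fin k)) ∈ B') (fun B' => (i, (⟨0, hk⟩ : Fin k)) ∈ B')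
        (hfinBase2 _)
      rw [e11s, e01s] at h1
      exact h1
    have hb : numBases (parallelBlowup M i j k hk) =
        numBasesWith2 M i j * k ^ s + numBasesWithWithout M i j * k ^ (s + 1) +
          (numBasesWithWithout M j i * k ^ (s + 1) + numBasesWithout2 M i j * k ^ (s + 2)) := by
      have h0 := card_split (fun B' : Set (α × Fin k) => (parallelBlowup M i j k hk).IsBase B')
        (fun B' => (i, (⟨0, hk⟩ : Fin k)) ∈ B') hfinBase
      have h1 := card_split3 (fun B' : Set (α × Fin k) => (parallelBlowup M i j k hk).IsBase B')
        (fun B' => (i, (⟨0, hk⟩ : Fin k)) ∈ B') (fun B' => (j, (⟨0, hk⟩ : Fin k)) ∈ B')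
        (hfinBase2 _)
      have h2 := card_split3 (fun B' : Set (α × Fin k) => (parallelBlowup M i j k hk).IsBase B')
        (fun B' => (i, (⟨0, hk⟩ : Fin k)) ∉ B') (fun B' => (j, (⟨0, hk⟩ : Fin k)) ∈ B')
        (hfinBase2 _)
      rw [h1, h2, e11, e10, e01x, e00] at h0
      exact h0
    -- positivity
    have hdk : 0 < numBasesWith2 M i j * k ^ s := Nat.mul_pos hDpos (pow_pos hk s)
    have hbik : 0 < numBasesWith2 M i j * k ^ s + numBasesWithWithout M i j * k ^ (s + 1) :=
      lt_of_lt_of_le hdk (Nat.le_add_right _ _)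
    have hbjk : 0 < numBasesWith2 M i j * k ^ s + numBasesWithWithout M j i * k ^ (s + 1) :=
      lt_of_lt_of_le hdk (Nat.le_add_right _ _)
    have hkR : (0:ℝ) < (k : ℝ) := by exact_mod_cast hk
    simp only [betaRatio]
    rw [hb, hbi, hbj, hbij]
    refine (div_eq_div_iff ?_ ?_).mpr ?_
    · exact mul_ne_zero (Nat.cast_ne_zero.mpr hbik.ne') (Nat.cast_ne_zero.mpr hbjk.ne')
    · positivity
    · push_cast
      ring
  refine ⟨hformula, ?_, ?_, ?_⟩
  · -- limit
    have hform' : ∀ n : ℕ,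
        betaRatio (parallelBlowup M i j (n + 1) n.succ_pos)
          (i, ⟨0, n.succ_pos⟩) (j, ⟨0, n.succ_pos⟩) =
        ((((n : ℝ) + 1) ^ 2 * ((numBasesWithout2 M i j : ℝ) * (numBasesWith2 M i j : ℝ)) +
            (((n : ℝ) + 1) * (numBasesWithWithout M i j : ℝ) +
              ((n : ℝ) + 1) * (numBasesWithWithout M j i : ℝ) +
              (numBasesWith2 M i j : ℝ)) * (numBasesWith2 M i j : ℝ)) /
          ((((n : ℝ) + 1)) ^ 2 * ((numBasesWithWithout M i j : ℝ) *
              (numBasesWithWithout M j i : ℝ)) +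
            (((n : ℝ) + 1) * (numBasesWithWithout M i j : ℝ) +
              ((n : ℝ) + 1) * (numBasesWithWithout M j i : ℝ) +
              (numBasesWith2 M i j : ℝ)) * (numBasesWith2 M i j : ℝ))) := by
      intro n
      rw [hformula (n + 1) n.succ_pos]
      push_cast
      ring
    have halpha : alphaRatio M i j =
        ((numBasesWithout2 M i j : ℝ) * (numBasesWith2 M i j : ℝ)) /
          ((numBasesWithWithout M i j : ℝ) * (numBasesWithWithout M j i : ℝ)) := rfl
    rw [halpha]
    exact (ratio_limit _ _ _ _ (Nat.cast_nonneg _) hxR hyR hdR).congr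
      fun n => (hform' n).symm
  · -- strictly increasing
    intro hlt
    have hltR : (numBasesWithWithout M i j : ℝ) * (numBasesWithWithout M j i : ℝ) <
        (numBasesWithout2 M i j : ℝ) * (numBasesWith2 M i j : ℝ) := by exact_mod_cast hlt
    apply strictMono_nat_of_lt_succ
    intro n
    have h1 := hformula (n + 1) n.succ_pos
    have h2 := hformula (n + 1 + 1) (n + 1).succ_pos
    simp only [h1, h2]
    push_cast
    exact ratio_mono _ _ _ _ hxR hyR hdR hltR ((n : ℝ) + 1) ((n : ℝ) + 1 + 1)
      (by positivity) (by linarith)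
  · -- strictly decreasing
    intro hlt
    have hltR : (numBasesWithout2 M i j : ℝ) * (numBasesWith2 M i j : ℝ) <
        (numBasesWithWithout M i j : ℝ) * (numBasesWithWithout M j i : ℝ) := by
      exact_mod_cast hlt
    apply strictAnti_nat_of_succ_lt
    intro n
    have h1 := hformula (n + 1) n.succ_pos
    have h2 := hformula (n + 1 + 1) (n + 1).succ_pos
    simp only [h1, h2]
    push_cast
    exact ratio_anti _ _ _ _ hxR hyR hdR hltR ((n : ℝ) + 1) ((n : ℝ) + 1 + 1)
      (by positivity) (by linarith)
end

section
/- Let p be a prime and r ≥ 2 an integer, and consider the labeled family of 2 + p·(r−1) vectors in F_p^r given by e_1, v = e_2 + ⋯ + e_r, and v_{k,ℓ} = k·e_1 + e_ℓ for 2 ≤ ℓ ≤ r and 0 ≤ k < p. Let i be the label of e_1 and j the label of v. Then the number of r-element subsets of labels whose vectors form a basis of F_p^r and which contain i but not j is b_i^j = p^{r−1}, and the number of such subsets containing both i and j is b_{ij} = (r−1)·p^{r−2}. -/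
/-- The index (label) type of the configuration `M_{r,p}`: one label for `e₁`, one label
for `v = e₂ + ⋯ + e_r`, and one label for each vector `v_{k,ℓ} = k·e₁ + e_ℓ` with
`ℓ ∈ {2, …, r}` (encoded as a nonzero index of `Fin r`) and `k ∈ F_p`. In total there
are `2 + p·(r−1)` labels. -/
abbrev MrpIndex (r p : ℕ) : Type :=
  Unit ⊕ Unit ⊕ ({l : Fin r // l.val ≠ 0} × ZMod p)

/-- The vectors of the configuration `M_{r,p}` in `F_p^r`: the label `Sum.inl ()`
carries `e₁`, the label `Sum.inr (Sum.inl ())` carries `v = e₂ + ⋯ + e_r`, and the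
label `Sum.inr (Sum.inr (ℓ, k))` carries `v_{k,ℓ} = k·e₁ + e_ℓ`. -/
def mrpVec (r p : ℕ) : MrpIndex r p → (Fin r → ZMod p)
  | Sum.inl _ => fun m => if m.val = 0 then 1 else 0
  | Sum.inr (Sum.inl _) => fun m => if m.val = 0 then 0 else 1
  | Sum.inr (Sum.inr lk) => fun m =>
      if m.val = 0 then lk.2 else if m = lk.1.1 then 1 else 0

/-- The label of the vector `e₁` in `M_{r,p}`. -/
def mrpI (r p : ℕ) : MrpIndex r p := Sum.inl ()

/-- The label of the vector `v = e₂ + ⋯ + e_r` in `M_{r,p}`. -/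
def mrpJ (r p : ℕ) : MrpIndex r p := Sum.inr (Sum.inl ())

/-- A finite set `s` of labels of a labeled family `w` of vectors forms a vector-space
basis if the family of vectors indexed by `s` is linearly independent and spans. -/
def FormsBasis (K : Type*) {ι : Type*} [Field K] {V : Type*} [AddCommGroup V] [Module K V]
    (w : ι → V) (s : Finset ι) : Prop :=
  LinearIndependent K (fun x : s => w x.val) ∧ Submodule.span K (w '' ↑s) = ⊤


open Finset

section Helpers
variable {p r : ℕ} [hp : Fact p.Prime]

lemma card_nz (hr : 2 ≤ r) : Fintype.card {l : Fin r // l.val ≠ 0} = r - 1 := by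
  haveI : NeZero r := ⟨by omega⟩
  have h1 : Fintype.card {l : Fin r // l.val = 0} = 1 := by
    refine Fintype.card_eq_one_iff.mpr ⟨⟨0, by simp⟩, ?_⟩
    rintro ⟨l, hl⟩
    exact Subtype.ext (Fin.ext (by simpa using hl))
  rw [Fintype.card_subtype_compl, h1, Fintype.card_fin]

lemma li_of_span {K V ι : Type*} [Field K] [AddCommGroup V] [Module K V] [FiniteDimensional K V]
    (w : ι → V) (s : Finset ι) (h : ⊤ ≤ Submodule.span K (w '' ↑s))
    (hc : s.card = Module.finrank K V) :
    LinearIndependent K (fun x : s => w x.val) := by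
  apply linearIndependent_of_top_le_span_of_card_eq_finrank
  · have hrange : Set.range (fun x : s => w x.val) = w '' ↑s := by ext v; simp
    rwa [hrange]
  · rw [Fintype.card_coe, hc]

noncomputable def mrpProj (r p : ℕ) :
    (Fin r → ZMod p) →ₗ[ZMod p] ({l : Fin r // l.val ≠ 0} → ZMod p) :=
  LinearMap.funLeft (ZMod p) (ZMod p) Subtype.val

lemma mrpProj_I : mrpProj r p (mrpVec r p (mrpI r p)) = 0 := by
  funext l
  simp [mrpProj, mrpVec, mrpI, LinearMap.funLeft_apply, l.2]

lemma mrpProj_J : mrpProj r p (mrpVec r p (mrpJ r p)) = fun _ => 1 := by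
  funext l
  simp [mrpProj, mrpJ, mrpVec, LinearMap.funLeft_apply, l.2]

lemma mrpProj_lk (lk : {l : Fin r // l.val ≠ 0} × ZMod p) :
    mrpProj r p (mrpVec r p (Sum.inr (Sum.inr lk))) =
      fun l => if l = lk.1 then 1 else 0 := by
  funext l
  simp [mrpProj, mrpVec, LinearMap.funLeft_apply, l.2, Subtype.ext_iff]

lemma mrpVec_I {m : Fin r} (hm : m.val = 0) :
    mrpVec r p (mrpI r p) = Pi.single m 1 := by
  funext n
  have : n = m ↔ n.val = 0 := by rw [Fin.ext_iff, hm]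
  by_cases h : n.val = 0 <;> simp [mrpVec, mrpI, Pi.single_apply, h, this]

lemma mrpVec_lk (lk : {l : Fin r // l.val ≠ 0} × ZMod p) :
    mrpVec r p (Sum.inr (Sum.inr lk)) =
      lk.2 • mrpVec r p (mrpI r p) + Pi.single lk.1.1 1 := by
  funext m
  by_cases h : m.val = 0
  · have hne : m ≠ lk.1.1 := fun he => lk.1.2 (he ▸ h)
    simp [mrpVec, mrpI, Pi.single_apply, h, hne]
  · simp [mrpVec, mrpI, Pi.single_apply, h]

lemma mrpVec_sum (hr : 2 ≤ r) :
    mrpVec r p (mrpJ r p) + mrpVec r p (mrpI r p) = fun _ => 1 := by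
  funext m
  by_cases h : m.val = 0 <;> simp [mrpVec, mrpI, mrpJ, h]

lemma span_top_of_singles (hr : 2 ≤ r) {s : Finset (MrpIndex r p)}
    (h : ∀ m : Fin r, Pi.single m (1 : ZMod p) ∈
      Submodule.span (ZMod p) (mrpVec r p '' ↑s)) :
    Submodule.span (ZMod p) (mrpVec r p '' ↑s) = ⊤ := by
  rw [eq_top_iff, ← (Pi.basisFun (ZMod p) (Fin r)).span_eq, Submodule.span_le]
  rw [Set.range_subset_iff]
  intro m
  simpa [Pi.basisFun_apply] using h m


noncomputable def phi1 (r p : ℕ) [Fact p.Prime] (f : {l : Fin r // l.val ≠ 0} → ZMod p) :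
    Finset (MrpIndex r p) :=
  insert (mrpI r p)
    (Finset.univ.image fun ℓ => (Sum.inr (Sum.inr (ℓ, f ℓ)) : MrpIndex r p))

lemma phi1_inj1 (f : {l : Fin r // l.val ≠ 0} → ZMod p) :
    Function.Injective fun ℓ => (Sum.inr (Sum.inr (ℓ, f ℓ)) : MrpIndex r p) := by
  intro a b h
  exact (Prod.ext_iff.mp (Sum.inr_injective (Sum.inr_injective h))).1

lemma phi1_card (hr : 2 ≤ r) (f : {l : Fin r // l.val ≠ 0} → ZMod p) :
    (phi1 r p f).card = r := by
  rw [phi1, Finset.card_insert_of_notMem (by simp [mrpI]),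
    Finset.card_image_of_injective _ (phi1_inj1 f), Finset.card_univ, card_nz hr]
  omega

lemma phi1_mem (f : {l : Fin r // l.val ≠ 0} → ZMod p) (ℓ : {l : Fin r // l.val ≠ 0}) :
    (Sum.inr (Sum.inr (ℓ, f ℓ)) : MrpIndex r p) ∈ phi1 r p f := by
  simp [phi1]

lemma phi1_span (hr : 2 ≤ r) (f : {l : Fin r // l.val ≠ 0} → ZMod p) :
    Submodule.span (ZMod p) (mrpVec r p '' ↑(phi1 r p f)) = ⊤ := by
  apply span_top_of_singles hr
  intro m
  have hI : mrpVec r p (mrpI r p) ∈ Submodule.span (ZMod p) (mrpVec r p '' ↑(phi1 r p f)) :=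
    Submodule.subset_span ⟨mrpI r p, by simp [phi1], rfl⟩
  by_cases h : m.val = 0
  · rw [← mrpVec_I h]; exact hI
  · set ℓ : {l : Fin r // l.val ≠ 0} := ⟨m, h⟩
    have hx : mrpVec r p (Sum.inr (Sum.inr (ℓ, f ℓ))) ∈
        Submodule.span (ZMod p) (mrpVec r p '' ↑(phi1 r p f)) :=
      Submodule.subset_span ⟨_, phi1_mem f ℓ, rfl⟩
    have hid := mrpVec_lk (p := p) (ℓ, f ℓ)
    have : Pi.single m (1 : ZMod p) =
        mrpVec r p (Sum.inr (Sum.inr (ℓ, f ℓ))) - f ℓ • mrpVec r p (mrpI r p) := by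
      rw [hid]; abel
    rw [this]
    exact Submodule.sub_mem _ hx (Submodule.smul_mem _ _ hI)

noncomputable def phi2 (r p : ℕ) [Fact p.Prime] (ℓ₀ : {l : Fin r // l.val ≠ 0})
    (f : {l : {l : Fin r // l.val ≠ 0} // l ≠ ℓ₀} → ZMod p) : Finset (MrpIndex r p) :=
  insert (mrpI r p) (insert (mrpJ r p)
    (Finset.univ.image fun ℓ => (Sum.inr (Sum.inr (ℓ.1, f ℓ)) : MrpIndex r p)))

lemma phi2_inj1 (ℓ₀ : {l : Fin r // l.val ≠ 0})
    (f : {l : {l : Fin r // l.val ≠ 0} // l ≠ ℓ₀} → ZMod p) :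
    Function.Injective fun ℓ => (Sum.inr (Sum.inr (ℓ.1, f ℓ)) : MrpIndex r p) := by
  intro a b h
  exact Subtype.ext (Prod.ext_iff.mp (Sum.inr_injective (Sum.inr_injective h))).1

lemma card_nz2 (hr : 2 ≤ r) (ℓ₀ : {l : Fin r // l.val ≠ 0}) :
    Fintype.card {l : {l : Fin r // l.val ≠ 0} // l ≠ ℓ₀} = r - 2 := by
  rw [Fintype.card_subtype_compl]
  have h1 : Fintype.card {l : {l : Fin r // l.val ≠ 0} // l = ℓ₀} = 1 :=
    Fintype.card_eq_one_iff.mpr ⟨⟨ℓ₀, rfl⟩, fun ⟨l, hl⟩ => Subtype.ext hl⟩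
  rw [h1, card_nz hr]
  omega

lemma phi2_card (hr : 2 ≤ r) (ℓ₀ : {l : Fin r // l.val ≠ 0})
    (f : {l : {l : Fin r // l.val ≠ 0} // l ≠ ℓ₀} → ZMod p) :
    (phi2 r p ℓ₀ f).card = r := by
  rw [phi2, Finset.card_insert_of_notMem (by simp [mrpI, mrpJ]),
    Finset.card_insert_of_notMem (by simp [mrpJ]),
    Finset.card_image_of_injective _ (phi2_inj1 ℓ₀ f), Finset.card_univ, card_nz2 hr]
  omega

lemma phi2_memI (ℓ₀ : {l : Fin r // l.val ≠ 0})
    (f : {l : {l : Fin r // l.val ≠ 0} // l ≠ ℓ₀} → ZMod p) :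
    mrpI r p ∈ phi2 r p ℓ₀ f := by simp [phi2]

lemma phi2_memJ (ℓ₀ : {l : Fin r // l.val ≠ 0})
    (f : {l : {l : Fin r // l.val ≠ 0} // l ≠ ℓ₀} → ZMod p) :
    mrpJ r p ∈ phi2 r p ℓ₀ f := by simp [phi2, mrpI, mrpJ]

lemma phi2_mem (ℓ₀ : {l : Fin r // l.val ≠ 0})
    (f : {l : {l : Fin r // l.val ≠ 0} // l ≠ ℓ₀} → ZMod p)
    (ℓ : {l : {l : Fin r // l.val ≠ 0} // l ≠ ℓ₀}) :
    (Sum.inr (Sum.inr (ℓ.1, f ℓ)) : MrpIndex r p) ∈ phi2 r p ℓ₀ f := by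
  simp [phi2]
  exact Or.inr (Or.inr ℓ.2)

lemma phi2_span (hr : 2 ≤ r) (ℓ₀ : {l : Fin r // l.val ≠ 0})
    (f : {l : {l : Fin r // l.val ≠ 0} // l ≠ ℓ₀} → ZMod p) :
    Submodule.span (ZMod p) (mrpVec r p '' ↑(phi2 r p ℓ₀ f)) = ⊤ := by
  apply span_top_of_singles hr
  set S := Submodule.span (ZMod p) (mrpVec r p '' ↑(phi2 r p ℓ₀ f)) with hS
  have hI : mrpVec r p (mrpI r p) ∈ S :=
    Submodule.subset_span ⟨mrpI r p, phi2_memI ℓ₀ f, rfl⟩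
  have hJ : mrpVec r p (mrpJ r p) ∈ S :=
    Submodule.subset_span ⟨mrpJ r p, phi2_memJ ℓ₀ f, rfl⟩
  -- first: all m ≠ ℓ₀.1
  have key : ∀ m : Fin r, m ≠ ℓ₀.1 → Pi.single m (1 : ZMod p) ∈ S := by
    intro m hm
    by_cases h : m.val = 0
    · rw [← mrpVec_I h]; exact hI
    · set ℓ : {l : {l : Fin r // l.val ≠ 0} // l ≠ ℓ₀} :=
        ⟨⟨m, h⟩, fun he => hm (by rw [← he])⟩ with hℓ
      have hx : mrpVec r p (Sum.inr (Sum.inr (ℓ.1, f ℓ))) ∈ S :=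
        Submodule.subset_span ⟨_, phi2_mem ℓ₀ f ℓ, rfl⟩
      have : Pi.single m (1 : ZMod p) =
          mrpVec r p (Sum.inr (Sum.inr (ℓ.1, f ℓ))) - f ℓ • mrpVec r p (mrpI r p) := by
        rw [mrpVec_lk (p := p) (ℓ.1, f ℓ)]; abel
      rw [this]
      exact Submodule.sub_mem _ hx (Submodule.smul_mem _ _ hI)
  intro m
  by_cases hm : m = ℓ₀.1
  · have hsum : ∑ n : Fin r, Pi.single n (1 : ZMod p) =
        mrpVec r p (mrpJ r p) + mrpVec r p (mrpI r p) := by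
      rw [mrpVec_sum hr]
      exact Finset.univ_sum_single (fun _ => (1 : ZMod p))
    have herase := Finset.sum_erase_add Finset.univ
      (fun n : Fin r => Pi.single n (1 : ZMod p)) (Finset.mem_univ m)
    have : Pi.single m (1 : ZMod p) =
        (mrpVec r p (mrpJ r p) + mrpVec r p (mrpI r p)) -
          ∑ n ∈ Finset.univ.erase m, Pi.single n (1 : ZMod p) := by
      rw [← hsum, ← herase]; abel
    rw [this]
    refine Submodule.sub_mem _ (Submodule.add_mem _ hJ hI) (Submodule.sum_mem _ ?_)
    intro n hn
    exact key n (hm ▸ Finset.ne_of_mem_erase hn)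
  · exact key m hm

lemma key_inj (hr : 2 ≤ r) (s : Finset (MrpIndex r p)) (hcard : s.card = r)
    (hFB : FormsBasis (ZMod p) (mrpVec r p) s) (hi : mrpI r p ∈ s) :
    Function.Injective
      (fun x : (s.erase (mrpI r p)) => mrpProj r p (mrpVec r p x.1)) := by
  have hspan : Submodule.span (ZMod p)
      ((fun y => mrpProj r p (mrpVec r p y)) '' ↑(s.erase (mrpI r p))) = ⊤ := by
    have h1 : (fun y => mrpProj r p (mrpVec r p y)) '' ↑s =
        mrpProj r p '' (mrpVec r p '' ↑s) := by rw [Set.image_image]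
    have h2 : Submodule.span (ZMod p) ((fun y => mrpProj r p (mrpVec r p y)) '' ↑s) = ⊤ := by
      rw [h1, Submodule.span_image, hFB.2, Submodule.map_top, LinearMap.range_eq_top]
      exact LinearMap.funLeft_surjective_of_injective _ _ _ Subtype.val_injective
    have h3 : (↑s : Set (MrpIndex r p)) = insert (mrpI r p) ↑(s.erase (mrpI r p)) := by
      rw [← Finset.coe_insert, Finset.insert_erase hi]
    rw [h3, Set.image_insert_eq, mrpProj_I, Submodule.span_insert_zero] at h2
    exact h2
  have hli : LinearIndependent (ZMod p)
      (fun x : (s.erase (mrpI r p)) => mrpProj r p (mrpVec r p x.1)) := by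
    apply li_of_span _ _ (le_of_eq hspan.symm)
    rw [Module.finrank_pi, card_nz hr, Finset.card_erase_of_mem hi, hcard]
  exact hli.injective

lemma surj1 (hr : 2 ≤ r) (s : Finset (MrpIndex r p)) (hcard : s.card = r)
    (hFB : FormsBasis (ZMod p) (mrpVec r p) s) (hi : mrpI r p ∈ s) (hj : mrpJ r p ∉ s) :
    ∃ f : {l : Fin r // l.val ≠ 0} → ZMod p, phi1 r p f = s := by
  classical
  set t := s.erase (mrpI r p) with ht
  have hform : ∀ x : t, ∃ lk : {l : Fin r // l.val ≠ 0} × ZMod p,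
      x.1 = Sum.inr (Sum.inr lk) := by
    rintro ⟨x, hx⟩
    match x with
    | Sum.inl u =>
        exact absurd rfl ((Finset.mem_erase.mp hx).1)
    | Sum.inr (Sum.inl u) =>
        exact absurd (Finset.mem_of_mem_erase hx) hj
    | Sum.inr (Sum.inr lk) => exact ⟨lk, rfl⟩
  set G : t → {l : Fin r // l.val ≠ 0} × ZMod p := fun x => Classical.choose (hform x) with hG
  have hGspec : ∀ x : t, x.1 = Sum.inr (Sum.inr (G x)) := fun x => Classical.choose_spec (hform x)
  have hkinj := key_inj hr s hcard hFB hi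
  have hinj : Function.Injective (fun x : t => (G x).1) := by
    intro a b hab
    apply hkinj
    show mrpProj r p (mrpVec r p a.1) = mrpProj r p (mrpVec r p b.1)
    have hab' : (G a).1 = (G b).1 := hab
    rw [hGspec a, hGspec b, mrpProj_lk, mrpProj_lk, hab']
  have hbij : Function.Bijective (fun x : t => (G x).1) := by
    rw [Fintype.bijective_iff_injective_and_card]
    refine ⟨hinj, ?_⟩
    rw [Fintype.card_coe, Finset.card_erase_of_mem hi, hcard, card_nz hr]
  set f : {l : Fin r // l.val ≠ 0} → ZMod p :=
    fun ℓ => (G (Classical.choose (hbij.2 ℓ))).2 with hf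
  refine ⟨f, ?_⟩
  apply Finset.eq_of_subset_of_card_le
  · intro x hx
    rw [phi1, Finset.mem_insert] at hx
    rcases hx with hx | hx
    · exact hx ▸ hi
    · rw [Finset.mem_image] at hx
      obtain ⟨ℓ, -, rfl⟩ := hx
      have hx0 := Classical.choose_spec (hbij.2 ℓ)
      have := hGspec (Classical.choose (hbij.2 ℓ))
      have hmem := (Classical.choose (hbij.2 ℓ)).2
      rw [this] at hmem
      have : G (Classical.choose (hbij.2 ℓ)) = (ℓ, f ℓ) := by
        rw [hf]; exact Prod.ext hx0 rfl
      rw [this] at hmem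
      exact Finset.mem_of_mem_erase hmem
  · rw [hcard, phi1_card hr f]

lemma surj2 (hr : 2 ≤ r) (s : Finset (MrpIndex r p)) (hcard : s.card = r)
    (hFB : FormsBasis (ZMod p) (mrpVec r p) s) (hi : mrpI r p ∈ s) (hj : mrpJ r p ∈ s) :
    ∃ ℓ₀ : {l : Fin r // l.val ≠ 0}, ∃ f : {l : {l : Fin r // l.val ≠ 0} // l ≠ ℓ₀} → ZMod p,
      phi2 r p ℓ₀ f = s := by
  classical
  have hji : mrpJ r p ∈ s.erase (mrpI r p) :=
    Finset.mem_erase.mpr ⟨by simp [mrpI, mrpJ], hj⟩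
  set t := (s.erase (mrpI r p)).erase (mrpJ r p) with ht
  have htcard : t.card = r - 2 := by
    rw [ht, Finset.card_erase_of_mem hji, Finset.card_erase_of_mem hi, hcard]
    omega
  have hform : ∀ x : t, ∃ lk : {l : Fin r // l.val ≠ 0} × ZMod p,
      x.1 = Sum.inr (Sum.inr lk) := by
    rintro ⟨x, hx⟩
    match x with
    | Sum.inl u =>
        exact absurd rfl ((Finset.mem_erase.mp (Finset.mem_of_mem_erase hx)).1)
    | Sum.inr (Sum.inl u) =>
        exact absurd rfl ((Finset.mem_erase.mp hx).1)
    | Sum.inr (Sum.inr lk) => exact ⟨lk, rfl⟩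
  set G : t → {l : Fin r // l.val ≠ 0} × ZMod p := fun x => Classical.choose (hform x) with hG
  have hGspec : ∀ x : t, x.1 = Sum.inr (Sum.inr (G x)) := fun x => Classical.choose_spec (hform x)
  have hkinj := key_inj hr s hcard hFB hi
  have hinj : Function.Injective (fun x : t => (G x).1) := by
    intro a b hab
    have hab' : (G a).1 = (G b).1 := hab
    have ha' : a.1 ∈ s.erase (mrpI r p) := Finset.mem_of_mem_erase a.2
    have hb' : b.1 ∈ s.erase (mrpI r p) := Finset.mem_of_mem_erase b.2
    have : (⟨a.1, ha'⟩ : (s.erase (mrpI r p))) = ⟨b.1, hb'⟩ := by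
      apply hkinj
      show mrpProj r p (mrpVec r p a.1) = mrpProj r p (mrpVec r p b.1)
      rw [hGspec a, hGspec b, mrpProj_lk, mrpProj_lk, hab']
    have h2 : a.1 = b.1 := Subtype.mk_eq_mk.mp this
    exact Subtype.ext h2
  set H : Finset {l : Fin r // l.val ≠ 0} := Finset.univ.image (fun x : t => (G x).1) with hH
  have hHcard : H.card = r - 2 := by
    rw [hH, Finset.card_image_of_injective _ hinj, Finset.card_univ, Fintype.card_coe, htcard]
  have hcompl : Hᶜ.card = 1 := by
    rw [Finset.card_compl, hHcard, card_nz hr]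
    omega
  obtain ⟨ℓ₀, hℓ₀⟩ := Finset.card_eq_one.mp hcompl
  have hmemH : ∀ ℓ : {l : Fin r // l.val ≠ 0}, ℓ ≠ ℓ₀ → ℓ ∈ H := by
    intro ℓ hne
    by_contra hℓ
    have : ℓ ∈ Hᶜ := Finset.mem_compl.mpr hℓ
    rw [hℓ₀, Finset.mem_singleton] at this
    exact hne this
  have hex : ∀ ℓ : {l : {l : Fin r // l.val ≠ 0} // l ≠ ℓ₀}, ∃ x : t, (G x).1 = ℓ.1 := by
    intro ℓ
    have := hmemH ℓ.1 ℓ.2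
    rw [hH, Finset.mem_image] at this
    obtain ⟨x, -, hx⟩ := this
    exact ⟨x, hx⟩
  set f : {l : {l : Fin r // l.val ≠ 0} // l ≠ ℓ₀} → ZMod p :=
    fun ℓ => (G (Classical.choose (hex ℓ))).2 with hf
  refine ⟨ℓ₀, f, ?_⟩
  apply Finset.eq_of_subset_of_card_le
  · intro x hx
    rw [phi2, Finset.mem_insert, Finset.mem_insert] at hx
    rcases hx with hx | hx | hx
    · exact hx ▸ hi
    · exact hx ▸ hj
    · rw [Finset.mem_image] at hx
      obtain ⟨ℓ, -, rfl⟩ := hx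
      have hx0 := Classical.choose_spec (hex ℓ)
      have hGs := hGspec (Classical.choose (hex ℓ))
      have hmem := (Classical.choose (hex ℓ)).2
      rw [hGs] at hmem
      have heq : G (Classical.choose (hex ℓ)) = (ℓ.1, f ℓ) := by
        rw [hf]; exact Prod.ext hx0 rfl
      rw [heq] at hmem
      exact Finset.mem_of_mem_erase (Finset.mem_of_mem_erase hmem)
  · rw [hcard, phi2_card hr ℓ₀ f]

lemma mem_phi1_inv (f : {l : Fin r // l.val ≠ 0} → ZMod p) (ℓ : {l : Fin r // l.val ≠ 0})
    (k : ZMod p) (h : (Sum.inr (Sum.inr (ℓ, k)) : MrpIndex r p) ∈ phi1 r p f) :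
    f ℓ = k := by
  rw [phi1, Finset.mem_insert] at h
  rcases h with h | h
  · exact absurd h (by simp [mrpI])
  · rw [Finset.mem_image] at h
    obtain ⟨ℓ', -, hℓ'⟩ := h
    have := Sum.inr_injective (Sum.inr_injective hℓ')
    rw [Prod.mk.injEq] at this
    obtain ⟨h1, h2⟩ := this
    exact h1 ▸ h2

lemma mem_phi2_inv (ℓ₀ : {l : Fin r // l.val ≠ 0})
    (f : {l : {l : Fin r // l.val ≠ 0} // l ≠ ℓ₀} → ZMod p) (ℓ : {l : Fin r // l.val ≠ 0})
    (k : ZMod p) (h : (Sum.inr (Sum.inr (ℓ, k)) : MrpIndex r p) ∈ phi2 r p ℓ₀ f) :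
    ∃ hne : ℓ ≠ ℓ₀, f ⟨ℓ, hne⟩ = k := by
  rw [phi2, Finset.mem_insert, Finset.mem_insert] at h
  rcases h with h | h | h
  · exact absurd h (by simp [mrpI])
  · exact absurd h (by simp [mrpJ])
  · rw [Finset.mem_image] at h
    obtain ⟨ℓ', -, hℓ'⟩ := h
    have := Sum.inr_injective (Sum.inr_injective hℓ')
    rw [Prod.mk.injEq] at this
    obtain ⟨h1, h2⟩ := this
    refine ⟨h1 ▸ ℓ'.2, ?_⟩
    have : (⟨ℓ, h1 ▸ ℓ'.2⟩ : {l : {l : Fin r // l.val ≠ 0} // l ≠ ℓ₀}) = ℓ' :=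
      Subtype.ext h1.symm
    rw [this]
    exact h2

lemma phi1_param_inj : Function.Injective (phi1 r p) := by
  intro f f' h
  funext ℓ
  have hm : (Sum.inr (Sum.inr (ℓ, f ℓ)) : MrpIndex r p) ∈ phi1 r p f' := h ▸ phi1_mem f ℓ
  exact (mem_phi1_inv f' ℓ (f ℓ) hm).symm

lemma phi2_param_inj :
    Function.Injective (fun x : Σ ℓ₀ : {l : Fin r // l.val ≠ 0},
        ({l : {l : Fin r // l.val ≠ 0} // l ≠ ℓ₀} → ZMod p) => phi2 r p x.1 x.2) := by
  rintro ⟨ℓ₀, f⟩ ⟨ℓ₀', f'⟩ h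
  simp only at h
  have hℓ : ℓ₀ = ℓ₀' := by
    by_contra hne
    have hm : (Sum.inr (Sum.inr (ℓ₀', f ⟨ℓ₀', fun he => hne he.symm⟩)) :
        MrpIndex r p) ∈ phi2 r p ℓ₀ f := phi2_mem ℓ₀ f ⟨ℓ₀', fun he => hne he.symm⟩
    rw [h] at hm
    obtain ⟨hne', -⟩ := mem_phi2_inv ℓ₀' f' _ _ hm
    exact hne' rfl
  subst hℓ
  have hf : f = f' := by
    funext ℓ
    have hm : (Sum.inr (Sum.inr (ℓ.1, f ℓ)) : MrpIndex r p) ∈ phi2 r p ℓ₀ f' :=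
      h ▸ phi2_mem ℓ₀ f ℓ
    obtain ⟨hne, hk⟩ := mem_phi2_inv ℓ₀ f' ℓ.1 (f ℓ) hm
    rw [← hk]
  subst hf
  rfl

lemma phi1_li (hr : 2 ≤ r) (f : {l : Fin r // l.val ≠ 0} → ZMod p) :
    LinearIndependent (ZMod p) (fun x : (phi1 r p f) => mrpVec r p x.val) :=
  li_of_span _ _ (le_of_eq (phi1_span hr f).symm)
    (by rw [phi1_card hr f, Module.finrank_pi, Fintype.card_fin])

lemma phi2_li (hr : 2 ≤ r) (ℓ₀ : {l : Fin r // l.val ≠ 0})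
    (f : {l : {l : Fin r // l.val ≠ 0} // l ≠ ℓ₀} → ZMod p) :
    LinearIndependent (ZMod p) (fun x : (phi2 r p ℓ₀ f) => mrpVec r p x.val) :=
  li_of_span _ _ (le_of_eq (phi2_span hr ℓ₀ f).symm)
    (by rw [phi2_card hr ℓ₀ f, Module.finrank_pi, Fintype.card_fin])

end Helpers

/-- For a prime `p` and `r ≥ 2`, in the configuration `M_{r,p}` the number of
`r`-element subsets of labels forming a basis of `F_p^r` that contain the label `i` of
`e₁` but not the label `j` of `v` is `b_i^j = p^(r−1)`, and the number of those
containing both `i` and `j` is `b_{ij} = (r−1)·p^(r−2)`. -/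
theorem stmt12 (p r : ℕ) [Fact p.Prime] (hr : 2 ≤ r) :
    Nat.card {s : Finset (MrpIndex r p) //
        s.card = r ∧ FormsBasis (ZMod p) (mrpVec r p) s ∧ mrpI r p ∈ s ∧ mrpJ r p ∉ s} =
      p ^ (r - 1) ∧
    Nat.card {s : Finset (MrpIndex r p) //
        s.card = r ∧ FormsBasis (ZMod p) (mrpVec r p) s ∧ mrpI r p ∈ s ∧ mrpJ r p ∈ s} =
      (r - 1) * p ^ (r - 2) := by
  constructor
  · have hb : Function.Bijective (fun f : ({l : Fin r // l.val ≠ 0} → ZMod p) =>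
        (⟨phi1 r p f, phi1_card hr f, ⟨phi1_li hr f, phi1_span hr f⟩,
          Finset.mem_insert_self _ _, by simp [phi1, mrpI, mrpJ]⟩ :
          {s : Finset (MrpIndex r p) //
            s.card = r ∧ FormsBasis (ZMod p) (mrpVec r p) s ∧ mrpI r p ∈ s ∧ mrpJ r p ∉ s})) := by
      constructor
      · intro f f' h
        exact phi1_param_inj (congrArg Subtype.val h)
      · rintro ⟨s, hcard, hFB, hi, hj⟩
        obtain ⟨f, hf⟩ := surj1 hr s hcard hFB hi hj
        exact ⟨f, Subtype.ext hf⟩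
    rw [← Nat.card_eq_of_bijective _ hb, Nat.card_fun, Nat.card_eq_fintype_card,
      Nat.card_eq_fintype_card, card_nz hr, ZMod.card]
  · have hb : Function.Bijective (fun x : Σ ℓ₀ : {l : Fin r // l.val ≠ 0},
        ({l : {l : Fin r // l.val ≠ 0} // l ≠ ℓ₀} → ZMod p) =>
        (⟨phi2 r p x.1 x.2, phi2_card hr x.1 x.2, ⟨phi2_li hr x.1 x.2, phi2_span hr x.1 x.2⟩,
          phi2_memI x.1 x.2, phi2_memJ x.1 x.2⟩ :
          {s : Finset (MrpIndex r p) //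
            s.card = r ∧ FormsBasis (ZMod p) (mrpVec r p) s ∧ mrpI r p ∈ s ∧ mrpJ r p ∈ s})) := by
      constructor
      · intro x x' h
        exact phi2_param_inj (congrArg Subtype.val h)
      · rintro ⟨s, hcard, hFB, hi, hj⟩
        obtain ⟨ℓ₀, f, hf⟩ := surj2 hr s hcard hFB hi hj
        exact ⟨⟨ℓ₀, f⟩, Subtype.ext hf⟩
    rw [← Nat.card_eq_of_bijective _ hb, Nat.card_eq_fintype_card, Fintype.card_sigma]
    have hterm : ∀ ℓ₀ : {l : Fin r // l.val ≠ 0},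
        Fintype.card ({l : {l : Fin r // l.val ≠ 0} // l ≠ ℓ₀} → ZMod p) = p ^ (r - 2) := by
      intro ℓ₀
      rw [Fintype.card_fun, ZMod.card, card_nz2 hr ℓ₀]
    rw [Finset.sum_congr rfl (fun ℓ₀ _ => hterm ℓ₀), Finset.sum_const, Finset.card_univ,
      card_nz hr, smul_eq_mul]
end

section
/- Let p be a prime and r ≥ 2 an integer, and consider the labeled family of 2 + p·(r−1) vectors in F_p^r given by e_1, v = e_2 + ⋯ + e_r, and v_{k,ℓ} = k·e_1 + e_ℓ for 2 ≤ ℓ ≤ r and 0 ≤ k < p. Let i be the label of e_1 and j the label of v. Then the number of r-element subsets of labels whose vectors form a basis of F_p^r and which contain neither i nor j is b^{ij} = (r−1)·((p−1)/2)·p^{r−1}, and the number of such subsets containing j but not i is b_j^i = (p^{r−2}·(p−1)/2)·(2 + (r−1)·(r−2)). -/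
namespace Stmt13

abbrev L (r : ℕ) := {l : Fin r // l.val ≠ 0}

variable (p r : ℕ) in
def uvec (ℓ : L r) (k : ZMod p) : MrpIndex r p := Sum.inr (Sum.inr (ℓ, k))

def E (p : ℕ) {r : ℕ} (m : Fin r) : Fin r → ZMod p := fun n => if n = m then 1 else 0

variable (p r : ℕ) in
def Vv : Fin r → ZMod p := fun n => if n.val = 0 then 0 else 1

variable {p r : ℕ}

lemma uvec_injective : Function.Injective2 (uvec p r) := by
  intro a b c d h
  simp only [uvec, Sum.inr.injEq, Prod.mk.injEq] at h
  exact ⟨h.1, h.2⟩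

lemma uvec_ne_I (ℓ k) : uvec p r ℓ k ≠ mrpI r p := by simp [uvec, mrpI]
lemma uvec_ne_J (ℓ k) : uvec p r ℓ k ≠ mrpJ r p := by simp [uvec, mrpJ]

lemma vec_uvec (hr : 0 < r) (ℓ : L r) (k : ZMod p) :
    mrpVec r p (uvec p r ℓ k) = k • E p ⟨0, hr⟩ + E p ℓ.1 := by
  funext m
  simp only [mrpVec, uvec, E, Pi.add_apply, Pi.smul_apply, smul_eq_mul]
  rcases eq_or_ne m.val 0 with h | h
  · have hne : m ≠ ℓ.1 := fun hc => ℓ.2 (hc ▸ h)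
    have hm0 : m = ⟨0, hr⟩ := by apply Fin.ext; simpa using h
    rw [if_pos h, if_pos hm0, if_neg hne, mul_one, add_zero]
  · have hne0 : m ≠ ⟨0, hr⟩ := fun hc => h (by rw [hc])
    rw [if_neg h, if_neg hne0, mul_zero, zero_add]

lemma vec_J : mrpVec r p (mrpJ r p) = Vv p r := rfl

lemma vec_I (hr : 0 < r) : mrpVec r p (mrpI r p) = E p ⟨0, hr⟩ := by
  funext m
  simp only [mrpVec, mrpI, E]
  rcases eq_or_ne m.val 0 with h | h
  · have hm0 : m = ⟨0, hr⟩ := by apply Fin.ext; simpa using h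
    rw [if_pos h, if_pos hm0]
  · have hne0 : m ≠ ⟨0, hr⟩ := fun hc => h (by rw [hc])
    rw [if_neg h, if_neg hne0]

lemma sum_E (hr : 0 < r) : ∑ ℓ : L r, E p ℓ.1 = Vv p r := by
  funext m
  rw [Finset.sum_apply]
  simp only [E, Vv]
  rcases eq_or_ne m.val 0 with h | h
  · rw [if_pos h, Finset.sum_eq_zero]
    intro ℓ _
    exact if_neg (fun hc => ℓ.2 (by rw [← hc]; exact h))
  · rw [if_neg h, Finset.sum_eq_single (⟨m, h⟩ : L r)]
    · simp
    · intro b _ hb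
      exact if_neg (fun hc => hb (Subtype.ext hc.symm))
    · simp

lemma span_top_of_E_mem {S : Set (Fin r → ZMod p)}
    (h : ∀ m : Fin r, E p m ∈ Submodule.span (ZMod p) S) :
    Submodule.span (ZMod p) S = ⊤ := by
  rw [eq_top_iff, ← (Pi.basisFun (ZMod p) (Fin r)).span_eq]
  apply Submodule.span_le.mpr
  rintro x ⟨m, rfl⟩
  have : (Pi.basisFun (ZMod p) (Fin r)) m = E p m := by
    funext n
    simp [Pi.basisFun_apply, E, Pi.single_apply]
  rw [this]
  exact h m

lemma span_ne_top_of_functional {S : Set (Fin r → ZMod p)}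
    (φ : (Fin r → ZMod p) →ₗ[ZMod p] ZMod p)
    (h0 : ∀ w ∈ S, φ w = 0) (x : Fin r → ZMod p) (hx : φ x ≠ 0) :
    Submodule.span (ZMod p) S ≠ ⊤ := by
  intro htop
  have hle : Submodule.span (ZMod p) S ≤ LinearMap.ker φ :=
    Submodule.span_le.mpr (fun w hw => h0 w hw)
  have : x ∈ Submodule.span (ZMod p) S := htop ▸ Submodule.mem_top
  exact hx (hle this)

end Stmt13

namespace Stmt13

variable {p r : ℕ}

lemma uvec_apply_zero (hr : 0 < r) (ℓ : L r) (k : ZMod p) :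
    mrpVec r p (uvec p r ℓ k) ⟨0, hr⟩ = k := by simp [mrpVec, uvec]

lemma uvec_apply_ne (ℓ ℓ' : L r) (k : ZMod p) :
    mrpVec r p (uvec p r ℓ k) ℓ'.1 = if ℓ' = ℓ then 1 else 0 := by
  simp only [mrpVec, uvec]
  rw [if_neg ℓ'.2]
  by_cases h : ℓ' = ℓ
  · rw [if_pos h, if_pos (by rw [h])]
  · rw [if_neg h, if_neg (fun hc => h (Subtype.ext hc))]

lemma Vv_apply_zero (hr : 0 < r) : Vv p r ⟨0, hr⟩ = 0 := by simp [Vv]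

lemma Vv_apply_ne (ℓ : L r) : Vv p r ℓ.1 = 1 := by simp [Vv, ℓ.2]

lemma E0_mem_span [Fact p.Prime] (hr : 0 < r) {S : Set (Fin r → ZMod p)} {ℓs : L r}
    {a b : ZMod p} (hab : a ≠ b) (ha : mrpVec r p (uvec p r ℓs a) ∈ S)
    (hb : mrpVec r p (uvec p r ℓs b) ∈ S) :
    E p ⟨0, hr⟩ ∈ Submodule.span (ZMod p) S := by
  have h1 : mrpVec r p (uvec p r ℓs a) - mrpVec r p (uvec p r ℓs b)
      = (a - b) • E p ⟨0, hr⟩ := by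
    rw [vec_uvec hr, vec_uvec hr, sub_smul]; abel
  have hmem := Submodule.sub_mem (Submodule.span (ZMod p) S) (Submodule.subset_span ha) (Submodule.subset_span hb)
  rw [h1] at hmem
  have hne : a - b ≠ 0 := sub_ne_zero.mpr hab
  have h2 := Submodule.smul_mem _ (a - b)⁻¹ hmem
  rwa [smul_smul, inv_mul_cancel₀ hne, one_smul] at h2

lemma El_mem_span (hr : 0 < r) {S : Set (Fin r → ZMod p)}
    (hE0 : E p ⟨0, hr⟩ ∈ Submodule.span (ZMod p) S) {ℓ : L r} {k : ZMod p}
    (h : mrpVec r p (uvec p r ℓ k) ∈ S) : E p ℓ.1 ∈ Submodule.span (ZMod p) S := by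
  have h1 : E p ℓ.1 = mrpVec r p (uvec p r ℓ k) - k • E p ⟨0, hr⟩ := by
    rw [vec_uvec hr]; abel
  rw [h1]
  exact Submodule.sub_mem _ (Submodule.subset_span h) (Submodule.smul_mem _ _ hE0)

lemma span_top_of_E0 (hr : 0 < r) {S : Set (Fin r → ZMod p)}
    (hE0 : E p ⟨0, hr⟩ ∈ Submodule.span (ZMod p) S)
    (h2 : ∀ ℓ : L r, ∃ k, mrpVec r p (uvec p r ℓ k) ∈ S) :
    Submodule.span (ZMod p) S = ⊤ := by
  apply span_top_of_E_mem
  intro m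
  rcases eq_or_ne m.val 0 with h | h
  · have : m = ⟨0, hr⟩ := by apply Fin.ext; simpa using h
    rw [this]; exact hE0
  · obtain ⟨k, hk⟩ := h2 ⟨m, h⟩
    exact El_mem_span hr hE0 hk

lemma E0_mem_span_A [Fact p.Prime] (hr : 0 < r) {S : Set (Fin r → ZMod p)}
    {g : L r → ZMod p} (hv : Vv p r ∈ S)
    (hall : ∀ ℓ : L r, mrpVec r p (uvec p r ℓ (g ℓ)) ∈ S)
    (hsum : ∑ ℓ : L r, g ℓ ≠ 0) : E p ⟨0, hr⟩ ∈ Submodule.span (ZMod p) S := by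
  have h1 : (∑ ℓ : L r, mrpVec r p (uvec p r ℓ (g ℓ))) - Vv p r
      = (∑ ℓ : L r, g ℓ) • E p ⟨0, hr⟩ := by
    rw [Finset.sum_congr rfl (fun ℓ _ => vec_uvec hr ℓ (g ℓ)), Finset.sum_add_distrib,
      ← sum_E (p := p) hr, Finset.sum_smul]
    abel
  have hsm : (∑ ℓ : L r, mrpVec r p (uvec p r ℓ (g ℓ))) ∈ Submodule.span (ZMod p) S :=
    Submodule.sum_mem _ (fun ℓ _ => Submodule.subset_span (hall ℓ))
  have hmem := Submodule.sub_mem (Submodule.span (ZMod p) S) hsm (Submodule.subset_span hv)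
  rw [h1] at hmem
  have h2 := Submodule.smul_mem _ (∑ ℓ : L r, g ℓ)⁻¹ hmem
  rwa [smul_smul, inv_mul_cancel₀ hsum, one_smul] at h2

lemma span_top_B (hr : 0 < r) {S : Set (Fin r → ZMod p)} (ℓ₀ : L r) (hv : Vv p r ∈ S)
    (hE0 : E p ⟨0, hr⟩ ∈ Submodule.span (ZMod p) S)
    (h2 : ∀ ℓ : L r, ℓ ≠ ℓ₀ → ∃ k, mrpVec r p (uvec p r ℓ k) ∈ S) :
    Submodule.span (ZMod p) S = ⊤ := by
  have hEo : ∀ ℓ : L r, ℓ ≠ ℓ₀ → E p ℓ.1 ∈ Submodule.span (ZMod p) S := by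
    intro ℓ h
    obtain ⟨k, hk⟩ := h2 ℓ h
    exact El_mem_span hr hE0 hk
  have hE00 : E p ℓ₀.1 ∈ Submodule.span (ZMod p) S := by
    have h1 : E p ℓ₀.1 = Vv p r - ∑ ℓ ∈ Finset.univ.erase ℓ₀, E p ℓ.1 := by
      rw [← sum_E (p := p) hr, ← Finset.add_sum_erase _ _ (Finset.mem_univ ℓ₀)]
      abel
    rw [h1]
    exact Submodule.sub_mem _ (Submodule.subset_span hv)
      (Submodule.sum_mem _ (fun ℓ hℓ => hEo ℓ (Finset.ne_of_mem_erase hℓ)))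
  apply span_top_of_E_mem
  intro m
  rcases eq_or_ne m.val 0 with h | h
  · have : m = ⟨0, hr⟩ := by apply Fin.ext; simpa using h
    rw [this]; exact hE0
  · rcases eq_or_ne (⟨m, h⟩ : L r) ℓ₀ with h' | h'
    · have : m = ℓ₀.1 := by rw [← h']
      rw [this]; exact hE00
    · exact hEo ⟨m, h⟩ h'

lemma span_ne_top_coord [Fact p.Prime] (m : Fin r) {S : Set (Fin r → ZMod p)}
    (h : ∀ w ∈ S, w m = 0) : Submodule.span (ZMod p) S ≠ ⊤ := by
  apply span_ne_top_of_functional (LinearMap.proj (R := ZMod p) (φ := fun _ => ZMod p) m) h (E p m)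
  simp only [LinearMap.proj_apply, E, if_pos rfl]
  exact one_ne_zero

lemma span_ne_top_two_coord [Fact p.Prime] {m₁ m₂ : Fin r} (hne : m₁ ≠ m₂) {S : Set (Fin r → ZMod p)}
    (h : ∀ w ∈ S, w m₁ = w m₂) : Submodule.span (ZMod p) S ≠ ⊤ := by
  apply span_ne_top_of_functional
    (LinearMap.proj (R := ZMod p) (φ := fun _ => ZMod p) m₁ -
      LinearMap.proj (R := ZMod p) (φ := fun _ => ZMod p) m₂)
    (fun w hw => by simp [h w hw]) (E p m₁)
  simp only [LinearMap.sub_apply, LinearMap.proj_apply, E, if_pos rfl,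
    if_neg (Ne.symm hne), sub_zero]
  exact one_ne_zero

lemma span_ne_top_sumzero [Fact p.Prime] (hr : 0 < r) (g : L r → ZMod p) {S : Set (Fin r → ZMod p)}
    (h : ∀ w ∈ S, w ⟨0, hr⟩ = ∑ ℓ : L r, g ℓ * w ℓ.1) :
    Submodule.span (ZMod p) S ≠ ⊤ := by
  apply span_ne_top_of_functional
    (LinearMap.proj (R := ZMod p) (φ := fun _ => ZMod p) ⟨0, hr⟩ -
      ∑ ℓ : L r, g ℓ • LinearMap.proj (R := ZMod p) (φ := fun _ => ZMod p) ℓ.1)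
    (fun w hw => by simp [h w hw]) (E p ⟨0, hr⟩)
  have h1 : ∀ ℓ : L r, E p ⟨0, hr⟩ ℓ.1 = 0 := by
    intro ℓ
    simp only [E]
    exact if_neg (fun hc => ℓ.2 (by rw [hc]))
  simp only [LinearMap.sub_apply, LinearMap.proj_apply, LinearMap.coe_sum,
    Finset.sum_apply, LinearMap.smul_apply, smul_eq_mul, E]
  have h2 : (∑ x : L r, g x * if (x.1 : Fin r) = ⟨0, hr⟩ then (1 : ZMod p) else 0) = 0 :=
    Finset.sum_eq_zero (fun x _ => by
      rw [if_neg (fun hc => x.2 (by rw [hc]))]; ring)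
  rw [h2, if_pos trivial, sub_zero]
  haveI : Fact (1 < p) := ⟨(Fact.out : p.Prime).one_lt⟩
  exact one_ne_zero

end Stmt13

namespace Stmt13

variable {p r : ℕ}

instance (priority := 100) neZeroOfFact [Fact p.Prime] : NeZero p :=
  ⟨(Fact.out : p.Prime).pos.ne'⟩

variable [Fact p.Prime]

def fib (s : Finset (MrpIndex r p)) (ℓ : L r) : Finset (ZMod p) :=
  Finset.univ.filter (fun k => uvec p r ℓ k ∈ s)

lemma mem_fib {s : Finset (MrpIndex r p)} {ℓ : L r} {k : ZMod p} :
    k ∈ fib s ℓ ↔ uvec p r ℓ k ∈ s := by simp [fib]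

def lab : MrpIndex r p → Option (L r)
  | Sum.inr (Sum.inr lk) => some lk.1
  | _ => none

def kof : MrpIndex r p → ZMod p
  | Sum.inr (Sum.inr lk) => lk.2
  | _ => 0

lemma mem_form {s : Finset (MrpIndex r p)} (hi : mrpI r p ∉ s) (hj : mrpJ r p ∉ s)
    {t : MrpIndex r p} (ht : t ∈ s) : ∃ ℓ k, t = uvec p r ℓ k := by
  rcases t with u | (u | ⟨ℓ, k⟩)
  · cases u; exact absurd ht hi
  · cases u; exact absurd ht hj
  · exact ⟨ℓ, k, rfl⟩

lemma card_eq_sum_fib {s : Finset (MrpIndex r p)} (hi : mrpI r p ∉ s)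
    (hj : mrpJ r p ∉ s) : s.card = ∑ ℓ : L r, (fib s ℓ).card := by
  classical
  rw [Finset.card_eq_sum_card_fiberwise (f := lab) (t := Finset.univ)
    (fun x _ => Finset.mem_univ _), Fintype.sum_option]
  have h0 : (s.filter (fun t => lab t = none)).card = 0 := by
    rw [Finset.card_eq_zero, Finset.filter_eq_empty_iff]
    intro t ht
    obtain ⟨ℓ, k, rfl⟩ := mem_form hi hj ht
    simp [lab, uvec]
  rw [h0, zero_add]
  apply Finset.sum_congr rfl
  intro ℓ _
  apply Finset.card_bij' (i := fun t _ => kof t) (j := fun k _ => uvec p r ℓ k)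
  · intro t ht
    rw [Finset.mem_filter] at ht
    obtain ⟨ℓ', k, rfl⟩ := mem_form hi hj ht.1
    have : ℓ' = ℓ := by simpa [lab, uvec] using ht.2
    subst this
    simpa [mem_fib, kof, uvec] using ht.1
  · intro k hk
    rw [Finset.mem_filter]
    exact ⟨mem_fib.mp hk, by simp [lab, uvec]⟩
  · intro t ht
    rw [Finset.mem_filter] at ht
    obtain ⟨ℓ', k, rfl⟩ := mem_form hi hj ht.1
    have : ℓ' = ℓ := by simpa [lab, uvec] using ht.2
    subst this
    rfl
  · intro k hk
    rfl

lemma fib_erase_J {s : Finset (MrpIndex r p)} (ℓ : L r) :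
    fib (s.erase (mrpJ r p)) ℓ = fib s ℓ := by
  ext k
  simp [mem_fib, Finset.mem_erase, uvec_ne_J]

lemma card_eq_sum_fib_j {s : Finset (MrpIndex r p)} (hi : mrpI r p ∉ s)
    (hj : mrpJ r p ∈ s) : s.card = 1 + ∑ ℓ : L r, (fib s ℓ).card := by
  classical
  have h1 : (s.erase (mrpJ r p)).card = ∑ ℓ : L r, (fib s ℓ).card := by
    rw [card_eq_sum_fib (fun h => hi (Finset.mem_of_mem_erase h))
      (fun h => absurd rfl (Finset.ne_of_mem_erase h))]
    exact Finset.sum_congr rfl (fun ℓ _ => by rw [fib_erase_J])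
  rw [← h1, Finset.card_erase_of_mem hj]
  have : 1 ≤ s.card := Finset.card_pos.mpr ⟨_, hj⟩
  omega

lemma pigeon_zero {ι : Type*} [Fintype ι] [DecidableEq ι] (f : ι → ℕ)
    (h1 : ∀ i, 1 ≤ f i) (hs : ∑ i, f i = Fintype.card ι) : ∀ i, f i = 1 := by
  intro i
  by_contra hne
  have h2 : 2 ≤ f i := by have := h1 i; omega
  have hrest : (Finset.univ.erase i).card ≤ ∑ j ∈ Finset.univ.erase i, f j := by
    simpa using Finset.card_nsmul_le_sum (Finset.univ.erase i) f 1 (fun x _ => h1 x)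
  have hsplit : f i + ∑ j ∈ Finset.univ.erase i, f j = ∑ j, f j :=
    Finset.add_sum_erase _ f (Finset.mem_univ i)
  have hcard : (Finset.univ.erase i).card = Fintype.card ι - 1 := by
    rw [Finset.card_erase_of_mem (Finset.mem_univ i), Finset.card_univ]
  have hpos : 1 ≤ Fintype.card ι := Fintype.card_pos_iff.mpr ⟨i⟩
  omega

lemma pigeon_one {ι : Type*} [Fintype ι] [DecidableEq ι] (f : ι → ℕ)
    (h1 : ∀ i, 1 ≤ f i) (hs : ∑ i, f i = Fintype.card ι + 1) :
    ∃ i₀, f i₀ = 2 ∧ ∀ i, i ≠ i₀ → f i = 1 := by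
  have hex : ∃ i₀, 2 ≤ f i₀ := by
    by_contra hc
    push_neg at hc
    have : ∀ i, f i = 1 := fun i => by have := h1 i; have := hc i; omega
    rw [Finset.sum_congr rfl (fun i _ => this i)] at hs
    simp [Finset.card_univ] at hs
  obtain ⟨i₀, hi₀⟩ := hex
  have hsplit : f i₀ + ∑ j ∈ Finset.univ.erase i₀, f j = ∑ j, f j :=
    Finset.add_sum_erase _ f (Finset.mem_univ i₀)
  have hrest : (Finset.univ.erase i₀).card ≤ ∑ j ∈ Finset.univ.erase i₀, f j := by
    simpa using Finset.card_nsmul_le_sum (Finset.univ.erase i₀) f 1 (fun x _ => h1 x)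
  have hcard : (Finset.univ.erase i₀).card = Fintype.card ι - 1 := by
    rw [Finset.card_erase_of_mem (Finset.mem_univ i₀), Finset.card_univ]
  have hpos : 1 ≤ Fintype.card ι := Fintype.card_pos_iff.mpr ⟨i₀⟩
  refine ⟨i₀, by omega, ?_⟩
  intro i hne
  by_contra hne2
  have h2 : 2 ≤ f i := by have := h1 i; omega
  have hi' : i ∈ Finset.univ.erase i₀ := Finset.mem_erase.mpr ⟨hne, Finset.mem_univ i⟩
  have hsplit2 : f i + ∑ j ∈ (Finset.univ.erase i₀).erase i, f j
      = ∑ j ∈ Finset.univ.erase i₀, f j := Finset.add_sum_erase _ f hi'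
  have hrest2 : ((Finset.univ.erase i₀).erase i).card
      ≤ ∑ j ∈ (Finset.univ.erase i₀).erase i, f j := by
    simpa using Finset.card_nsmul_le_sum _ f 1 (fun x _ => h1 x)
  have hcard2 : ((Finset.univ.erase i₀).erase i).card = Fintype.card ι - 2 := by
    rw [Finset.card_erase_of_mem hi', hcard]
    omega
  have hpos2 : 2 ≤ Fintype.card ι :=
    Fintype.one_lt_card_iff_nontrivial.mpr ⟨⟨i, i₀, hne⟩⟩
  omega

lemma span_image (s : Finset (MrpIndex r p)) :
    Submodule.span (ZMod p) (mrpVec r p '' ↑s) = Submodule.span (ZMod p) (mrpVec r p '' (s : Set (MrpIndex r p))) := rfl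

lemma fib_nonempty_count1 {s : Finset (MrpIndex r p)} (hi : mrpI r p ∉ s)
    (hj : mrpJ r p ∉ s)
    (hspan : Submodule.span (ZMod p) (mrpVec r p '' ↑s) = ⊤) (ℓ : L r) :
    (fib s ℓ).Nonempty := by
  rw [Finset.nonempty_iff_ne_empty]
  intro hemp
  apply span_ne_top_coord ℓ.1 _ hspan
  rintro w ⟨t, ht, rfl⟩
  obtain ⟨ℓ', k, rfl⟩ := mem_form hi hj ht
  rw [uvec_apply_ne]
  apply if_neg
  intro hc
  subst hc
  have : k ∈ fib s ℓ := mem_fib.mpr ht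
  rw [hemp] at this
  exact absurd this (Finset.notMem_empty k)

lemma fib_one_empty_count2 {s : Finset (MrpIndex r p)} (hi : mrpI r p ∉ s)
    (hj : mrpJ r p ∈ s)
    (hspan : Submodule.span (ZMod p) (mrpVec r p '' ↑s) = ⊤) {ℓ₁ ℓ₂ : L r}
    (hne : ℓ₁ ≠ ℓ₂) (h1 : fib s ℓ₁ = ∅) (h2 : fib s ℓ₂ = ∅) : False := by
  apply span_ne_top_two_coord (m₁ := ℓ₁.1) (m₂ := ℓ₂.1)
    (fun hc => hne (Subtype.ext hc)) _ hspan
  rintro w ⟨t, ht, rfl⟩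
  rcases t with u | (u | ⟨ℓ', k⟩)
  · cases u; exact absurd ht hi
  · rw [show (Sum.inr (Sum.inl u) : MrpIndex r p) = mrpJ r p from rfl, vec_J,
      Vv_apply_ne, Vv_apply_ne]
  · have hne1 : ℓ₁ ≠ ℓ' := by
      intro hc; subst hc
      have : k ∈ fib s ℓ₁ := mem_fib.mpr ht
      rw [h1] at this; exact absurd this (Finset.notMem_empty k)
    have hne2 : ℓ₂ ≠ ℓ' := by
      intro hc; subst hc
      have : k ∈ fib s ℓ₂ := mem_fib.mpr ht
      rw [h2] at this; exact absurd this (Finset.notMem_empty k)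
    rw [show (Sum.inr (Sum.inr (ℓ', k)) : MrpIndex r p) = uvec p r ℓ' k from rfl,
      uvec_apply_ne, uvec_apply_ne, if_neg hne1, if_neg hne2]

lemma sum_ne_zero_count2 {s : Finset (MrpIndex r p)} (hr : 0 < r) (hi : mrpI r p ∉ s)
    (hj : mrpJ r p ∈ s) {g : L r → ZMod p}
    (hfib : ∀ ℓ k, uvec p r ℓ k ∈ s ↔ k = g ℓ)
    (hspan : Submodule.span (ZMod p) (mrpVec r p '' ↑s) = ⊤) :
    ∑ ℓ : L r, g ℓ ≠ 0 := by
  intro hzero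
  apply span_ne_top_sumzero hr g _ hspan
  rintro w ⟨t, ht, rfl⟩
  rcases t with u | (u | ⟨ℓ', k⟩)
  · cases u; exact absurd ht hi
  · rw [show (Sum.inr (Sum.inl u) : MrpIndex r p) = mrpJ r p from rfl, vec_J,
      Vv_apply_zero hr]
    rw [Finset.sum_congr rfl (fun ℓ _ => by rw [Vv_apply_ne, mul_one])]
    exact hzero.symm
  · have hk : k = g ℓ' := (hfib ℓ' k).mp ht
    rw [show (Sum.inr (Sum.inr (ℓ', k)) : MrpIndex r p) = uvec p r ℓ' k from rfl,
      uvec_apply_zero hr]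
    rw [Finset.sum_congr rfl (fun ℓ _ => by rw [uvec_apply_ne, mul_ite, mul_one, mul_zero])]
    rw [Finset.sum_ite_eq' Finset.univ ℓ' g, if_pos (Finset.mem_univ ℓ')]
    exact hk

end Stmt13

namespace Stmt13

variable {p r : ℕ} [Fact p.Prime]

abbrev T1 (p r : ℕ) [Fact p.Prime] : Type :=
  Σ ℓs : L r, {A : Finset (ZMod p) // A.card = 2} × ({ℓ : L r // ℓ ≠ ℓs} → ZMod p)

def toS1 (d : T1 p r) : Finset (MrpIndex r p) :=
  d.2.1.1.image (uvec p r d.1) ∪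
    Finset.univ.image (fun ℓ : {ℓ : L r // ℓ ≠ d.1} => uvec p r ℓ.1 (d.2.2 ℓ))

lemma mem_toS1 {d : T1 p r} {t : MrpIndex r p} :
    t ∈ toS1 d ↔ (∃ k ∈ d.2.1.1, uvec p r d.1 k = t) ∨
      (∃ ℓ : {ℓ : L r // ℓ ≠ d.1}, uvec p r ℓ.1 (d.2.2 ℓ) = t) := by
  simp [toS1]

lemma uvec_mem_toS1 {d : T1 p r} {ℓ : L r} {k : ZMod p} :
    uvec p r ℓ k ∈ toS1 d ↔ (ℓ = d.1 ∧ k ∈ d.2.1.1) ∨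
      ∃ h : ℓ ≠ d.1, d.2.2 ⟨ℓ, h⟩ = k := by
  rw [mem_toS1]
  constructor
  · rintro (⟨k', hk', he⟩ | ⟨ℓ', he⟩)
    · obtain ⟨h1, h2⟩ := uvec_injective he
      exact Or.inl ⟨h1.symm, h2 ▸ hk'⟩
    · obtain ⟨h1, h2⟩ := uvec_injective he
      refine Or.inr ⟨h1 ▸ ℓ'.2, ?_⟩
      have : (⟨ℓ, h1 ▸ ℓ'.2⟩ : {ℓ : L r // ℓ ≠ d.1}) = ℓ' := Subtype.ext h1.symm
      rw [this]; exact h2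
  · rintro (⟨rfl, hk⟩ | ⟨h, hg⟩)
    · exact Or.inl ⟨k, hk, rfl⟩
    · exact Or.inr ⟨⟨ℓ, h⟩, by rw [hg]⟩

lemma I_not_mem_toS1 (d : T1 p r) : mrpI r p ∉ toS1 d := by
  rw [mem_toS1]
  rintro (⟨k, _, he⟩ | ⟨ℓ, he⟩) <;> exact uvec_ne_I _ _ he

lemma J_not_mem_toS1 (d : T1 p r) : mrpJ r p ∉ toS1 d := by
  rw [mem_toS1]
  rintro (⟨k, _, he⟩ | ⟨ℓ, he⟩) <;> exact uvec_ne_J _ _ he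

lemma card_L (hr : 2 ≤ r) : Fintype.card (L r) = r - 1 := by
  have h0 : 0 < r := by omega
  have h1 : Fintype.card {l : Fin r // l.val = 0} = 1 :=
    Fintype.card_eq_one_iff.mpr ⟨⟨⟨0, h0⟩, rfl⟩, fun y => Subtype.ext (Fin.ext y.2)⟩
  have := Fintype.card_subtype_compl (fun l : Fin r => l.val = 0)
  rw [h1, Fintype.card_fin] at this
  exact this

lemma card_Lne (hr : 2 ≤ r) (ℓs : L r) :
    Fintype.card {ℓ : L r // ℓ ≠ ℓs} = r - 2 := by
  have h1 : Fintype.card {ℓ : L r // ℓ = ℓs} = 1 := Fintype.card_subtype_eq ℓs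
  have := Fintype.card_subtype_compl (fun ℓ : L r => ℓ = ℓs)
  rw [h1, card_L hr] at this
  rw [this]
  omega

lemma card_toS1 (hr : 2 ≤ r) (d : T1 p r) : (toS1 d).card = r := by
  rw [toS1, Finset.card_union_of_disjoint]
  · rw [Finset.card_image_of_injective _ (fun a b h => (uvec_injective h).2),
      Finset.card_image_of_injective _
        (fun a b h => Subtype.ext ((uvec_injective h).1)),
      d.2.1.2, Finset.card_univ, card_Lne hr]
    omega
  · rw [Finset.disjoint_left]
    rintro t ht ht'
    rw [Finset.mem_image] at ht ht'
    obtain ⟨k, _, rfl⟩ := ht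
    obtain ⟨ℓ', _, he⟩ := ht'
    exact ℓ'.2 (uvec_injective he).1

lemma span_toS1 (hr : 2 ≤ r) (d : T1 p r) :
    Submodule.span (ZMod p) (mrpVec r p '' ↑(toS1 d)) = ⊤ := by
  have h0 : 0 < r := by omega
  obtain ⟨a, b, hab, hA⟩ := Finset.card_eq_two.mp d.2.1.2
  have hmemA : ∀ k ∈ d.2.1.1, mrpVec r p (uvec p r d.1 k) ∈ mrpVec r p '' ↑(toS1 d) :=
    fun k hk => Set.mem_image_of_mem _
      (Finset.mem_coe.mpr (uvec_mem_toS1.mpr (Or.inl ⟨rfl, hk⟩)))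
  apply span_top_of_E0 h0
  · exact E0_mem_span h0 hab (hmemA a (by rw [hA]; simp))
      (hmemA b (by rw [hA]; simp))
  · intro ℓ
    by_cases h : ℓ = d.1
    · subst h
      exact ⟨a, hmemA a (by rw [hA]; simp)⟩
    · exact ⟨d.2.2 ⟨ℓ, h⟩, Set.mem_image_of_mem _
        (Finset.mem_coe.mpr (uvec_mem_toS1.mpr (Or.inr ⟨h, rfl⟩)))⟩

lemma toS1_injective : Function.Injective (toS1 (p := p) (r := r)) := by
  rintro ⟨ℓ1, A1, g1⟩ ⟨ℓ2, A2, g2⟩ h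
  obtain ⟨a, b, hab, hA⟩ := Finset.card_eq_two.mp A1.2
  have hmem : ∀ k ∈ A1.1, uvec p r ℓ1 k ∈ toS1 ⟨ℓ2, A2, g2⟩ := by
    intro k hk
    rw [← h]
    exact uvec_mem_toS1.mpr (Or.inl ⟨rfl, hk⟩)
  have hℓ : ℓ1 = ℓ2 := by
    by_contra hne
    have ha' := uvec_mem_toS1.mp (hmem a (by rw [hA]; simp))
    have hb' := uvec_mem_toS1.mp (hmem b (by rw [hA]; simp))
    rcases ha' with ⟨h1, _⟩ | ⟨h1, hg1⟩
    · exact hne h1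
    rcases hb' with ⟨h2, _⟩ | ⟨h2, hg2⟩
    · exact hne h2
    exact hab (hg1.symm.trans hg2)
  subst hℓ
  have hA12 : A1 = A2 := by
    apply Subtype.ext
    ext k
    have h1 : k ∈ A1.1 ↔ uvec p r ℓ1 k ∈ toS1 ⟨ℓ1, A1, g1⟩ := by
      rw [uvec_mem_toS1]
      constructor
      · intro hk; exact Or.inl ⟨rfl, hk⟩
      · rintro (⟨_, hk⟩ | ⟨hne, _⟩)
        · exact hk
        · exact absurd rfl hne
    have h2 : k ∈ A2.1 ↔ uvec p r ℓ1 k ∈ toS1 ⟨ℓ1, A2, g2⟩ := by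
      rw [uvec_mem_toS1]
      constructor
      · intro hk; exact Or.inl ⟨rfl, hk⟩
      · rintro (⟨_, hk⟩ | ⟨hne, _⟩)
        · exact hk
        · exact absurd rfl hne
    rw [h1, h, ← h2]
  have hg12 : g1 = g2 := by
    funext ℓ
    have hm : uvec p r ℓ.1 (g1 ℓ) ∈ toS1 ⟨ℓ1, A2, g2⟩ := by
      rw [← h]
      exact uvec_mem_toS1.mpr (Or.inr ⟨ℓ.2, rfl⟩)
    rcases uvec_mem_toS1.mp hm with ⟨h1, _⟩ | ⟨hne, hg⟩
    · exact absurd h1 ℓ.2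
    · exact hg.symm
  rw [hA12, hg12]

lemma toS1_surjective (hr : 2 ≤ r) {s : Finset (MrpIndex r p)} (hcard : s.card = r)
    (hspan : Submodule.span (ZMod p) (mrpVec r p '' ↑s) = ⊤)
    (hi : mrpI r p ∉ s) (hj : mrpJ r p ∉ s) : ∃ d : T1 p r, toS1 d = s := by
  have hne : ∀ ℓ : L r, (fib s ℓ).Nonempty := fib_nonempty_count1 hi hj hspan
  have hsum : ∑ ℓ : L r, (fib s ℓ).card = Fintype.card (L r) + 1 := by
    rw [← card_eq_sum_fib hi hj, hcard, card_L hr]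
    omega
  obtain ⟨ℓs, h2, hrest⟩ := pigeon_one _ (fun ℓ => Finset.card_pos.mpr (hne ℓ)) hsum
  have hsing : ∀ ℓ : {ℓ : L r // ℓ ≠ ℓs}, ∃ k, fib s ℓ.1 = {k} :=
    fun ℓ => Finset.card_eq_one.mp (hrest ℓ.1 ℓ.2)
  choose g hg using hsing
  refine ⟨⟨ℓs, ⟨fib s ℓs, h2⟩, g⟩, ?_⟩
  ext t
  rw [mem_toS1]
  constructor
  · rintro (⟨k, hk, rfl⟩ | ⟨ℓ, rfl⟩)
    · exact mem_fib.mp hk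
    · apply mem_fib.mp
      rw [hg ℓ]
      exact Finset.mem_singleton_self _
  · intro ht
    obtain ⟨ℓ, k, rfl⟩ := mem_form hi hj ht
    by_cases hc : ℓ = ℓs
    · subst hc
      exact Or.inl ⟨k, mem_fib.mpr ht, rfl⟩
    · refine Or.inr ⟨⟨ℓ, hc⟩, ?_⟩
      have : k ∈ fib s ℓ := mem_fib.mpr ht
      rw [hg ⟨ℓ, hc⟩] at this
      rw [Finset.mem_singleton.mp this]

lemma formsBasis_iff {s : Finset (MrpIndex r p)} (hcard : s.card = r) :
    FormsBasis (ZMod p) (mrpVec r p) s ↔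
      Submodule.span (ZMod p) (mrpVec r p '' ↑s) = ⊤ := by
  constructor
  · exact And.right
  · intro h
    refine ⟨?_, h⟩
    apply linearIndependent_of_top_le_span_of_card_eq_finrank
    · have him : Set.range (fun x : s => mrpVec r p x.val) = mrpVec r p '' ↑s := by
        ext y
        simp [Set.mem_range, Set.mem_image]
      rw [him, h]
    · rw [Fintype.card_coe, hcard, Module.finrank_fin_fun]

lemma count1 (hr : 2 ≤ r) :
    Nat.card {s : Finset (MrpIndex r p) //
        s.card = r ∧ FormsBasis (ZMod p) (mrpVec r p) s ∧
          mrpI r p ∉ s ∧ mrpJ r p ∉ s} = (r - 1) * p.choose 2 * p ^ (r - 2) := by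
  have hbij : Function.Bijective (fun d : T1 p r =>
      (⟨toS1 d, card_toS1 hr d, (formsBasis_iff (card_toS1 hr d)).mpr (span_toS1 hr d),
        I_not_mem_toS1 d, J_not_mem_toS1 d⟩ : {s : Finset (MrpIndex r p) //
        s.card = r ∧ FormsBasis (ZMod p) (mrpVec r p) s ∧
          mrpI r p ∉ s ∧ mrpJ r p ∉ s})) := by
    constructor
    · intro d1 d2 h
      exact toS1_injective (congrArg Subtype.val h)
    · rintro ⟨s, hcard, hbasis, hi, hj⟩
      obtain ⟨d, hd⟩ := toS1_surjective hr hcard ((formsBasis_iff hcard).mp hbasis) hi hj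
      exact ⟨d, Subtype.ext hd⟩
  rw [← Nat.card_eq_of_bijective _ hbij]
  rw [Nat.card_eq_fintype_card, Fintype.card_sigma]
  have hterm : ∀ ℓs : L r,
      Fintype.card ({A : Finset (ZMod p) // A.card = 2} × ({ℓ : L r // ℓ ≠ ℓs} → ZMod p))
        = p.choose 2 * p ^ (r - 2) := by
    intro ℓs
    rw [Fintype.card_prod, Fintype.card_finset_len, Fintype.card_fun, ZMod.card,
      card_Lne hr ℓs]
  rw [Finset.sum_congr rfl (fun ℓs _ => hterm ℓs), Finset.sum_const, Finset.card_univ,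
    card_L hr, smul_eq_mul, mul_assoc]

end Stmt13

namespace Stmt13

variable {p r : ℕ} [Fact p.Prime]

abbrev T2A (p r : ℕ) [Fact p.Prime] : Type :=
  {g : L r → ZMod p // ∑ ℓ : L r, g ℓ ≠ 0}

abbrev T2B (p r : ℕ) [Fact p.Prime] : Type :=
  Σ ℓ₀ : L r, Σ ℓs : {ℓ : L r // ℓ ≠ ℓ₀},
    {A : Finset (ZMod p) // A.card = 2} × ({ℓ : L r // ℓ ≠ ℓ₀ ∧ ℓ ≠ ℓs.1} → ZMod p)

def toS2A (d : T2A p r) : Finset (MrpIndex r p) :=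
  insert (mrpJ r p) (Finset.univ.image (fun ℓ : L r => uvec p r ℓ (d.1 ℓ)))

def toS2B (d : T2B p r) : Finset (MrpIndex r p) :=
  insert (mrpJ r p) (d.2.2.1.1.image (uvec p r d.2.1.1) ∪
    Finset.univ.image
      (fun ℓ : {ℓ : L r // ℓ ≠ d.1 ∧ ℓ ≠ d.2.1.1} => uvec p r ℓ.1 (d.2.2.2 ℓ)))

lemma J_mem_toS2A (d : T2A p r) : mrpJ r p ∈ toS2A d := Finset.mem_insert_self _ _
lemma J_mem_toS2B (d : T2B p r) : mrpJ r p ∈ toS2B d := Finset.mem_insert_self _ _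

lemma uvec_mem_toS2A {d : T2A p r} {ℓ : L r} {k : ZMod p} :
    uvec p r ℓ k ∈ toS2A d ↔ k = d.1 ℓ := by
  simp only [toS2A, Finset.mem_insert, Finset.mem_image, Finset.mem_univ, true_and]
  constructor
  · rintro (he | ⟨ℓ', he⟩)
    · exact absurd he (uvec_ne_J _ _)
    · obtain ⟨h1, h2⟩ := uvec_injective he
      rw [← h2, h1]
  · rintro rfl
    exact Or.inr ⟨ℓ, rfl⟩

lemma uvec_mem_toS2B {d : T2B p r} {ℓ : L r} {k : ZMod p} :
    uvec p r ℓ k ∈ toS2B d ↔ (ℓ = d.2.1.1 ∧ k ∈ d.2.2.1.1) ∨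
      ∃ h : ℓ ≠ d.1 ∧ ℓ ≠ d.2.1.1, d.2.2.2 ⟨ℓ, h⟩ = k := by
  simp only [toS2B, Finset.mem_insert, Finset.mem_union, Finset.mem_image,
    Finset.mem_univ, true_and]
  constructor
  · rintro (he | ⟨k', hk', he⟩ | ⟨ℓ', he⟩)
    · exact absurd he (uvec_ne_J _ _)
    · obtain ⟨h1, h2⟩ := uvec_injective he
      exact Or.inl ⟨h1.symm, h2 ▸ hk'⟩
    · obtain ⟨h1, h2⟩ := uvec_injective he
      refine Or.inr ⟨⟨h1 ▸ ℓ'.2.1, h1 ▸ ℓ'.2.2⟩, ?_⟩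
      have : (⟨ℓ, ⟨h1 ▸ ℓ'.2.1, h1 ▸ ℓ'.2.2⟩⟩ : {ℓ : L r // ℓ ≠ d.1 ∧ ℓ ≠ d.2.1.1}) = ℓ' :=
        Subtype.ext h1.symm
      rw [this]; exact h2
  · rintro (⟨rfl, hk⟩ | ⟨h, hg⟩)
    · exact Or.inr (Or.inl ⟨k, hk, rfl⟩)
    · exact Or.inr (Or.inr ⟨⟨ℓ, h⟩, by rw [hg]⟩)

lemma I_not_mem_toS2A (d : T2A p r) : mrpI r p ∉ toS2A d := by
  simp only [toS2A, Finset.mem_insert, Finset.mem_image, Finset.mem_univ, true_and]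
  rintro (he | ⟨ℓ, he⟩)
  · exact absurd he.symm (by simp [mrpI, mrpJ])
  · exact uvec_ne_I _ _ he

lemma I_not_mem_toS2B (d : T2B p r) : mrpI r p ∉ toS2B d := by
  simp only [toS2B, Finset.mem_insert, Finset.mem_union, Finset.mem_image,
    Finset.mem_univ, true_and]
  rintro (he | ⟨k, _, he⟩ | ⟨ℓ, he⟩)
  · exact absurd he.symm (by simp [mrpI, mrpJ])
  · exact uvec_ne_I _ _ he
  · exact uvec_ne_I _ _ he

lemma uvec_not_mem_toS2B_l0 (d : T2B p r) (k : ZMod p) : uvec p r d.1 k ∉ toS2B d := by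
  rw [uvec_mem_toS2B]
  rintro (⟨h1, _⟩ | ⟨⟨h1, _⟩, _⟩)
  · exact d.2.1.2 h1.symm
  · exact h1 rfl

lemma card_Lne2 (hr : 2 ≤ r) (ℓ₀ ℓs : L r) (hne : ℓs ≠ ℓ₀) :
    Fintype.card {ℓ : L r // ℓ ≠ ℓ₀ ∧ ℓ ≠ ℓs} = r - 3 := by
  rw [Fintype.card_subtype]
  have h1 : Finset.univ.filter (fun ℓ : L r => ℓ ≠ ℓ₀ ∧ ℓ ≠ ℓs)
      = Finset.univ \ {ℓ₀, ℓs} := by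
    ext ℓ
    simp [Finset.mem_sdiff, not_or]
  rw [h1, Finset.card_sdiff_of_subset (by simp), Finset.card_univ, card_L hr,
    Finset.card_insert_of_notMem (by simp [Ne.symm hne]), Finset.card_singleton]
  omega

lemma card_toS2A (hr : 2 ≤ r) (d : T2A p r) : (toS2A d).card = r := by
  rw [toS2A, Finset.card_insert_of_notMem, Finset.card_image_of_injective _
    (fun a b h => (uvec_injective h).1), Finset.card_univ, card_L hr]
  · omega
  · rw [Finset.mem_image]
    rintro ⟨ℓ, _, he⟩
    exact uvec_ne_J _ _ he

lemma card_toS2B (hr : 2 ≤ r) (d : T2B p r) : (toS2B d).card = r := by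
  have hdisj : Disjoint (d.2.2.1.1.image (uvec p r d.2.1.1))
      (Finset.univ.image
        (fun ℓ : {ℓ : L r // ℓ ≠ d.1 ∧ ℓ ≠ d.2.1.1} => uvec p r ℓ.1 (d.2.2.2 ℓ))) := by
    rw [Finset.disjoint_left]
    rintro t ht ht'
    rw [Finset.mem_image] at ht ht'
    obtain ⟨k, _, rfl⟩ := ht
    obtain ⟨ℓ', _, he⟩ := ht'
    exact ℓ'.2.2 (uvec_injective he).1
  rw [toS2B, Finset.card_insert_of_notMem, Finset.card_union_of_disjoint hdisj,
    Finset.card_image_of_injective _ (fun a b h => (uvec_injective h).2),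
    Finset.card_image_of_injective _ (fun a b h => Subtype.ext ((uvec_injective h).1)),
    d.2.2.1.2, Finset.card_univ, card_Lne2 hr d.1 d.2.1.1 d.2.1.2]
  · rcases Nat.lt_or_ge r 3 with h3 | h3
    · exfalso
      have hc0 : Fintype.card {ℓ : L r // ℓ ≠ d.1} = 0 := by
        rw [card_Lne hr]; omega
      exact (Fintype.card_eq_zero_iff.mp hc0).false d.2.1
    · omega
  · rw [Finset.mem_union, Finset.mem_image, Finset.mem_image]
    rintro (⟨k, _, he⟩ | ⟨ℓ, _, he⟩) <;> exact uvec_ne_J _ _ he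

lemma Vv_mem_image {s : Finset (MrpIndex r p)} (hj : mrpJ r p ∈ s) :
    Vv p r ∈ mrpVec r p '' ↑s := ⟨mrpJ r p, Finset.mem_coe.mpr hj, rfl⟩

lemma span_toS2A (hr : 2 ≤ r) (d : T2A p r) :
    Submodule.span (ZMod p) (mrpVec r p '' ↑(toS2A d)) = ⊤ := by
  have h0 : 0 < r := by omega
  have hall : ∀ ℓ : L r, mrpVec r p (uvec p r ℓ (d.1 ℓ)) ∈ mrpVec r p '' ↑(toS2A d) :=
    fun ℓ => Set.mem_image_of_mem _ (Finset.mem_coe.mpr (uvec_mem_toS2A.mpr rfl))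
  apply span_top_of_E0 h0
  · exact E0_mem_span_A h0 (Vv_mem_image (J_mem_toS2A d)) hall d.2
  · exact fun ℓ => ⟨d.1 ℓ, hall ℓ⟩

lemma span_toS2B (hr : 2 ≤ r) (d : T2B p r) :
    Submodule.span (ZMod p) (mrpVec r p '' ↑(toS2B d)) = ⊤ := by
  have h0 : 0 < r := by omega
  obtain ⟨a, b, hab, hA⟩ := Finset.card_eq_two.mp d.2.2.1.2
  have hmemA : ∀ k ∈ d.2.2.1.1,
      mrpVec r p (uvec p r d.2.1.1 k) ∈ mrpVec r p '' ↑(toS2B d) :=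
    fun k hk => Set.mem_image_of_mem _
      (Finset.mem_coe.mpr (uvec_mem_toS2B.mpr (Or.inl ⟨rfl, hk⟩)))
  have hE0 : E p ⟨0, h0⟩ ∈ Submodule.span (ZMod p) (mrpVec r p '' ↑(toS2B d)) :=
    E0_mem_span h0 hab (hmemA a (by rw [hA]; simp)) (hmemA b (by rw [hA]; simp))
  apply span_top_B h0 d.1 (Vv_mem_image (J_mem_toS2B d)) hE0
  intro ℓ hℓ
  by_cases hc : ℓ = d.2.1.1
  · subst hc
    exact ⟨a, hmemA a (by rw [hA]; simp)⟩
  · exact ⟨d.2.2.2 ⟨ℓ, hℓ, hc⟩, Set.mem_image_of_mem _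
      (Finset.mem_coe.mpr (uvec_mem_toS2B.mpr (Or.inr ⟨⟨hℓ, hc⟩, rfl⟩)))⟩

end Stmt13

namespace Stmt13

variable {p r : ℕ} [Fact p.Prime]

lemma toS2A_injective : Function.Injective (toS2A (p := p) (r := r)) := by
  intro d1 d2 h
  apply Subtype.ext; funext ℓ
  have hm : uvec p r ℓ (d1.1 ℓ) ∈ toS2A d2 := by
    rw [← h]; exact uvec_mem_toS2A.mpr rfl
  exact uvec_mem_toS2A.mp hm

lemma toS2_AB_ne (d1 : T2A p r) (d2 : T2B p r) : toS2A d1 ≠ toS2B d2 := by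
  intro h
  have hm : uvec p r d2.1 (d1.1 d2.1) ∈ toS2B d2 := by
    rw [← h]; exact uvec_mem_toS2A.mpr rfl
  exact uvec_not_mem_toS2B_l0 d2 _ hm

lemma toS2B_injective : Function.Injective (toS2B (p := p) (r := r)) := by
  rintro ⟨ℓ01, ℓs1, A1, g1⟩ ⟨ℓ02, ℓs2, A2, g2⟩ h
  obtain ⟨a, b, hab, hA⟩ := Finset.card_eq_two.mp A1.2
  have hmemA1 : ∀ k ∈ A1.1, uvec p r ℓs1.1 k ∈ toS2B ⟨ℓ02, ℓs2, A2, g2⟩ := by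
    intro k hk
    rw [← h]
    exact uvec_mem_toS2B.mpr (Or.inl ⟨rfl, hk⟩)
  have hℓ0 : ℓ01 = ℓ02 := by
    by_contra hne
    by_cases hc : ℓ02 = ℓs1.1
    · have := hmemA1 a (by rw [hA]; simp)
      rw [← hc] at this
      exact uvec_not_mem_toS2B_l0 ⟨ℓ02, ℓs2, A2, g2⟩ a this
    · have hm : uvec p r ℓ02 (g1 ⟨ℓ02, fun hcc => hne hcc.symm, fun hcc => hc hcc⟩)
          ∈ toS2B ⟨ℓ02, ℓs2, A2, g2⟩ := by
        rw [← h]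
        exact uvec_mem_toS2B.mpr (Or.inr ⟨⟨fun hcc => hne hcc.symm, hc⟩, rfl⟩)
      exact uvec_not_mem_toS2B_l0 ⟨ℓ02, ℓs2, A2, g2⟩ _ hm
  subst hℓ0
  have hℓs : ℓs1 = ℓs2 := by
    by_contra hne
    have hne' : ℓs1.1 ≠ ℓs2.1 := fun hc => hne (Subtype.ext hc)
    have ha' := uvec_mem_toS2B.mp (hmemA1 a (by rw [hA]; simp))
    have hb' := uvec_mem_toS2B.mp (hmemA1 b (by rw [hA]; simp))
    rcases ha' with ⟨h1, _⟩ | ⟨_, hg1⟩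
    · exact hne' h1
    rcases hb' with ⟨h2, _⟩ | ⟨_, hg2⟩
    · exact hne' h2
    exact hab (hg1.symm.trans hg2)
  subst hℓs
  have hA12 : A1 = A2 := by
    apply Subtype.ext
    ext k
    have h1 : k ∈ A1.1 ↔ uvec p r ℓs1.1 k ∈ toS2B ⟨ℓ01, ℓs1, A1, g1⟩ := by
      rw [uvec_mem_toS2B]
      constructor
      · intro hk; exact Or.inl ⟨rfl, hk⟩
      · rintro (⟨_, hk⟩ | ⟨⟨_, hne⟩, _⟩)
        · exact hk
        · exact absurd rfl hne
    have h2 : k ∈ A2.1 ↔ uvec p r ℓs1.1 k ∈ toS2B ⟨ℓ01, ℓs1, A2, g2⟩ := by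
      rw [uvec_mem_toS2B]
      constructor
      · intro hk; exact Or.inl ⟨rfl, hk⟩
      · rintro (⟨_, hk⟩ | ⟨⟨_, hne⟩, _⟩)
        · exact hk
        · exact absurd rfl hne
    rw [h1, h, ← h2]
  have hg12 : g1 = g2 := by
    funext ℓ
    have hm : uvec p r ℓ.1 (g1 ℓ) ∈ toS2B ⟨ℓ01, ℓs1, A2, g2⟩ := by
      rw [← h]
      exact uvec_mem_toS2B.mpr (Or.inr ⟨ℓ.2, rfl⟩)
    rcases uvec_mem_toS2B.mp hm with ⟨h1, _⟩ | ⟨_, hg⟩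
    · exact absurd h1 ℓ.2.2
    · exact hg.symm
  rw [hA12, hg12]

lemma mem_form_j {s : Finset (MrpIndex r p)} (hi : mrpI r p ∉ s)
    {t : MrpIndex r p} (ht : t ∈ s) :
    t = mrpJ r p ∨ ∃ ℓ k, t = uvec p r ℓ k := by
  rcases t with u | (u | ⟨ℓ, k⟩)
  · cases u; exact absurd ht hi
  · cases u; exact Or.inl rfl
  · exact Or.inr ⟨ℓ, k, rfl⟩

lemma sum_split {ι : Type*} [Fintype ι] [DecidableEq ι] {M : Type*} [AddCommMonoid M]
    (i₀ : ι) (f : ι → M) :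
    ∑ i : ι, f i = f i₀ + ∑ i : {i : ι // i ≠ i₀}, f i.1 := by
  rw [← Finset.add_sum_erase _ f (Finset.mem_univ i₀)]
  congr 1
  exact Finset.sum_subtype (Finset.univ.erase i₀) (fun x => by simp) f

lemma toS2_surjective (hr : 2 ≤ r) {s : Finset (MrpIndex r p)} (hcard : s.card = r)
    (hspan : Submodule.span (ZMod p) (mrpVec r p '' ↑s) = ⊤)
    (hi : mrpI r p ∉ s) (hj : mrpJ r p ∈ s) :
    (∃ d : T2A p r, toS2A d = s) ∨ (∃ d : T2B p r, toS2B d = s) := by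
  have h0 : 0 < r := by omega
  have hsum : 1 + ∑ ℓ : L r, (fib s ℓ).card = r := by
    rw [← card_eq_sum_fib_j hi hj, hcard]
  by_cases hall : ∀ ℓ : L r, (fib s ℓ).Nonempty
  · -- all fibers nonempty: singleton fibers
    have hone := pigeon_zero (fun ℓ => (fib s ℓ).card)
      (fun ℓ => Finset.card_pos.mpr (hall ℓ))
      (by show ∑ ℓ : L r, (fib s ℓ).card = Fintype.card (L r); rw [card_L hr]; omega)
    have hsing : ∀ ℓ : L r, ∃ k, fib s ℓ = {k} :=
      fun ℓ => Finset.card_eq_one.mp (hone ℓ)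
    choose g hg using hsing
    have hfib : ∀ ℓ k, uvec p r ℓ k ∈ s ↔ k = g ℓ := by
      intro ℓ k
      rw [← mem_fib, hg ℓ, Finset.mem_singleton]
    have hsumne := sum_ne_zero_count2 h0 hi hj hfib hspan
    left
    refine ⟨⟨g, hsumne⟩, ?_⟩
    ext t
    simp only [toS2A, Finset.mem_insert, Finset.mem_image, Finset.mem_univ, true_and]
    constructor
    · rintro (rfl | ⟨ℓ, rfl⟩)
      · exact hj
      · exact (hfib ℓ (g ℓ)).mpr rfl
    · intro hts
      rcases mem_form_j hi hts with rfl | ⟨ℓ, k, rfl⟩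
      · exact Or.inl rfl
      · exact Or.inr ⟨ℓ, by rw [(hfib ℓ k).mp hts]⟩
  · -- one empty fiber
    push_neg at hall
    obtain ⟨ℓ₀, hℓ₀⟩ := hall
    have hothers : ∀ ℓ' : {ℓ : L r // ℓ ≠ ℓ₀}, (fib s ℓ'.1).Nonempty := by
      intro ℓ'
      rw [Finset.nonempty_iff_ne_empty]
      intro hemp
      exact fib_one_empty_count2 hi hj hspan ℓ'.2 hemp hℓ₀
    have hsplit : ∑ ℓ : L r, (fib s ℓ).card
        = ∑ ℓ' : {ℓ : L r // ℓ ≠ ℓ₀}, (fib s ℓ'.1).card := by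
      rw [sum_split ℓ₀, hℓ₀, Finset.card_empty, zero_add]
    have hsum2 : ∑ ℓ' : {ℓ : L r // ℓ ≠ ℓ₀}, (fib s ℓ'.1).card
        = Fintype.card {ℓ : L r // ℓ ≠ ℓ₀} + 1 := by
      rw [← hsplit, card_Lne hr]
      omega
    obtain ⟨ℓs, h2, hrest⟩ := pigeon_one _
      (fun ℓ' => Finset.card_pos.mpr (hothers ℓ')) hsum2
    have hsing : ∀ ℓ' : {ℓ : L r // ℓ ≠ ℓ₀ ∧ ℓ ≠ ℓs.1}, ∃ k, fib s ℓ'.1 = {k} := by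
      intro ℓ'
      apply Finset.card_eq_one.mp
      exact hrest ⟨ℓ'.1, ℓ'.2.1⟩ (fun hc => ℓ'.2.2 (congrArg Subtype.val hc))
    choose g hg using hsing
    right
    refine ⟨⟨ℓ₀, ℓs, ⟨fib s ℓs.1, h2⟩, g⟩, ?_⟩
    ext t
    simp only [toS2B, Finset.mem_insert, Finset.mem_union, Finset.mem_image,
      Finset.mem_univ, true_and]
    constructor
    · rintro (rfl | ⟨k, hk, rfl⟩ | ⟨ℓ', rfl⟩)
      · exact hj
      · exact mem_fib.mp hk
      · apply mem_fib.mp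
        rw [hg ℓ']
        exact Finset.mem_singleton_self _
    · intro hts
      rcases mem_form_j hi hts with rfl | ⟨ℓ, k, rfl⟩
      · exact Or.inl rfl
      · have hkf : k ∈ fib s ℓ := mem_fib.mpr hts
        by_cases hc0 : ℓ = ℓ₀
        · subst hc0
          rw [hℓ₀] at hkf
          exact absurd hkf (Finset.notMem_empty k)
        · by_cases hcs : ℓ = ℓs.1
          · subst hcs
            exact Or.inr (Or.inl ⟨k, hkf, rfl⟩)
          · refine Or.inr (Or.inr ⟨⟨ℓ, hc0, hcs⟩, ?_⟩)
            rw [hg ⟨ℓ, hc0, hcs⟩] at hkf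
            rw [Finset.mem_singleton.mp hkf]

lemma card_ne_zero_zmod : Fintype.card {k : ZMod p // k ≠ 0} = p - 1 := by
  have h := Fintype.card_subtype_compl (fun k : ZMod p => k = 0)
  rw [Fintype.card_subtype_eq, ZMod.card] at h
  exact h

lemma card_T2A (hr : 2 ≤ r) : Fintype.card (T2A p r) = p ^ (r - 2) * (p - 1) := by
  have hone : (1 : ℕ) < r := by omega
  let ℓone : L r := ⟨⟨1, hone⟩, by simp⟩
  let e : T2A p r ≃ ({ℓ : L r // ℓ ≠ ℓone} → ZMod p) × {k : ZMod p // k ≠ 0} :=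
    { toFun := fun g => ⟨fun ℓ => g.1 ℓ.1, ⟨∑ ℓ : L r, g.1 ℓ, g.2⟩⟩
      invFun := fun x => ⟨fun ℓ => if hc : ℓ = ℓone
          then x.2.1 - ∑ ℓ' : {ℓ : L r // ℓ ≠ ℓone}, x.1 ℓ'
          else x.1 ⟨ℓ, hc⟩, by
        rw [sum_split ℓone, dif_pos rfl,
          Finset.sum_congr rfl (fun (ℓ' : {ℓ : L r // ℓ ≠ ℓone}) _ => (dif_neg ℓ'.2 : (if hc : ℓ'.1 = ℓone then x.2.1 - ∑ ℓ'' : {ℓ : L r // ℓ ≠ ℓone}, x.1 ℓ'' else x.1 ⟨ℓ'.1, hc⟩) = x.1 ⟨ℓ'.1, ℓ'.2⟩)), sub_add_cancel]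
        exact x.2.2⟩
      left_inv := fun g => by
        apply Subtype.ext
        funext ℓ
        dsimp only
        by_cases hc : ℓ = ℓone
        · rw [dif_pos hc, hc, sum_split ℓone g.1, add_sub_cancel_right]
        · rw [dif_neg hc]
      right_inv := fun x => by
        have hfst : (fun ℓ' : {ℓ : L r // ℓ ≠ ℓone} =>
            if hc : ℓ'.1 = ℓone then x.2.1 - ∑ ℓ'' : {ℓ : L r // ℓ ≠ ℓone}, x.1 ℓ''
            else x.1 ⟨ℓ'.1, hc⟩) = x.1 := by
          funext ℓ'
          simp only [dif_neg ℓ'.2]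
        apply Prod.ext
        · exact hfst
        · apply Subtype.ext
          dsimp only
          rw [sum_split ℓone, dif_pos rfl,
            Finset.sum_congr rfl (fun (ℓ' : {ℓ : L r // ℓ ≠ ℓone}) _ => (dif_neg ℓ'.2 : (if hc : ℓ'.1 = ℓone then x.2.1 - ∑ ℓ'' : {ℓ : L r // ℓ ≠ ℓone}, x.1 ℓ'' else x.1 ⟨ℓ'.1, hc⟩) = x.1 ⟨ℓ'.1, ℓ'.2⟩)), sub_add_cancel] }
  rw [Fintype.card_congr e, Fintype.card_prod, Fintype.card_fun, ZMod.card,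
    card_Lne hr, card_ne_zero_zmod]

lemma card_T2B (hr : 2 ≤ r) :
    Fintype.card (T2B p r) = (r - 1) * ((r - 2) * (p.choose 2 * p ^ (r - 3))) := by
  rw [Fintype.card_sigma]
  have hterm : ∀ ℓ₀ : L r,
      Fintype.card (Σ ℓs : {ℓ : L r // ℓ ≠ ℓ₀},
        {A : Finset (ZMod p) // A.card = 2} × ({ℓ : L r // ℓ ≠ ℓ₀ ∧ ℓ ≠ ℓs.1} → ZMod p))
      = (r - 2) * (p.choose 2 * p ^ (r - 3)) := by
    intro ℓ₀
    rw [Fintype.card_sigma]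
    have hterm2 : ∀ ℓs : {ℓ : L r // ℓ ≠ ℓ₀},
        Fintype.card ({A : Finset (ZMod p) // A.card = 2} ×
          ({ℓ : L r // ℓ ≠ ℓ₀ ∧ ℓ ≠ ℓs.1} → ZMod p))
        = p.choose 2 * p ^ (r - 3) := by
      intro ℓs
      rw [Fintype.card_prod, Fintype.card_finset_len, Fintype.card_fun, ZMod.card,
        card_Lne2 hr ℓ₀ ℓs.1 ℓs.2]
    rw [Finset.sum_congr rfl (fun ℓs _ => hterm2 ℓs), Finset.sum_const,
      Finset.card_univ, card_Lne hr, smul_eq_mul]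
  rw [Finset.sum_congr rfl (fun ℓ₀ _ => hterm ℓ₀), Finset.sum_const,
    Finset.card_univ, card_L hr, smul_eq_mul]

lemma count2 (hr : 2 ≤ r) :
    Nat.card {s : Finset (MrpIndex r p) //
        s.card = r ∧ FormsBasis (ZMod p) (mrpVec r p) s ∧
          mrpI r p ∉ s ∧ mrpJ r p ∈ s}
      = p ^ (r - 2) * (p - 1) + (r - 1) * ((r - 2) * (p.choose 2 * p ^ (r - 3))) := by
  let F : T2A p r ⊕ T2B p r → {s : Finset (MrpIndex r p) //
      s.card = r ∧ FormsBasis (ZMod p) (mrpVec r p) s ∧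
        mrpI r p ∉ s ∧ mrpJ r p ∈ s} :=
    Sum.elim
      (fun d => ⟨toS2A d, card_toS2A hr d,
        (formsBasis_iff (card_toS2A hr d)).mpr (span_toS2A hr d),
        I_not_mem_toS2A d, J_mem_toS2A d⟩)
      (fun d => ⟨toS2B d, card_toS2B hr d,
        (formsBasis_iff (card_toS2B hr d)).mpr (span_toS2B hr d),
        I_not_mem_toS2B d, J_mem_toS2B d⟩)
  have hbij : Function.Bijective F := by
    constructor
    · rintro (d1 | d1) (d2 | d2) h <;>
        simp only [F, Sum.elim_inl, Sum.elim_inr, Subtype.mk.injEq] at h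
      · rw [toS2A_injective h]
      · exact absurd h (toS2_AB_ne d1 d2)
      · exact absurd h.symm (toS2_AB_ne d2 d1)
      · rw [toS2B_injective h]
    · rintro ⟨s, hcard, hbasis, hi, hj⟩
      rcases toS2_surjective hr hcard ((formsBasis_iff hcard).mp hbasis) hi hj with
        ⟨d, hd⟩ | ⟨d, hd⟩
      · exact ⟨Sum.inl d, Subtype.ext hd⟩
      · exact ⟨Sum.inr d, Subtype.ext hd⟩
  rw [← Nat.card_eq_of_bijective F hbij, Nat.card_eq_fintype_card, Fintype.card_sum,
    card_T2A hr, card_T2B hr]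

end Stmt13

/-- For a prime `p` and `r ≥ 2`, in the configuration `M_{r,p}` the number of
`r`-element subsets of labels forming a basis of `F_p^r` that contain neither the label
`i` of `e₁` nor the label `j` of `v` is `b^{ij} = (r−1)·((p−1)/2)·p^(r−1)`, and the
number of those containing `j` but not `i` is
`b_j^i = (p^(r−2)·(p−1)/2)·(2 + (r−1)·(r−2))`. -/
theorem stmt13 (p r : ℕ) [Fact p.Prime] (hr : 2 ≤ r) :
    (Nat.card {s : Finset (MrpIndex r p) //
        s.card = r ∧ FormsBasis (ZMod p) (mrpVec r p) s ∧
          mrpI r p ∉ s ∧ mrpJ r p ∉ s} : ℚ) =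
      ((r : ℚ) - 1) * (((p : ℚ) - 1) / 2) * (p : ℚ) ^ (r - 1) ∧
    (Nat.card {s : Finset (MrpIndex r p) //
        s.card = r ∧ FormsBasis (ZMod p) (mrpVec r p) s ∧
          mrpI r p ∉ s ∧ mrpJ r p ∈ s} : ℚ) =
      ((p : ℚ) ^ (r - 2) * ((p : ℚ) - 1) / 2) * (2 + ((r : ℚ) - 1) * ((r : ℚ) - 2)) := by
  have hp : 2 ≤ p := (Fact.out : p.Prime).two_le
  have h1p : 1 ≤ p := by omega
  have hchoose : ((p.choose 2 : ℕ) : ℚ) = (p : ℚ) * ((p : ℚ) - 1) / 2 := by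
    rw [Nat.choose_two_right]
    have hdvd : 2 ∣ p * (p - 1) := by
      rcases Nat.even_or_odd p with he | ho
      · exact Dvd.dvd.mul_right he.two_dvd _
      · exact Dvd.dvd.mul_left (Nat.Odd.sub_odd ho odd_one).two_dvd _
    rw [Nat.cast_div hdvd (by norm_num)]
    rw [Nat.cast_mul, Nat.cast_sub h1p]
    push_cast
    ring
  constructor
  · rw [Stmt13.count1 hr]
    rw [Nat.cast_mul, Nat.cast_mul, Nat.cast_pow, Nat.cast_sub (show 1 ≤ r by omega),
      hchoose, show r - 1 = (r - 2) + 1 from by omega, pow_succ]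
    push_cast
    ring
  · rw [Stmt13.count2 hr]
    rcases eq_or_lt_of_le hr with heq | hlt
    · subst heq
      norm_num [Nat.cast_sub h1p]
    · have h3 : 3 ≤ r := hlt
      simp only [Nat.cast_add, Nat.cast_mul, Nat.cast_pow, hchoose, Nat.cast_sub h1p,
        Nat.cast_sub (show 1 ≤ r by omega), Nat.cast_sub (show 2 ≤ r by omega),
        Nat.cast_one, Nat.cast_ofNat]
      rw [show r - 2 = (r - 3) + 1 from by omega, pow_succ]
      ring
end
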